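/- arXiv:2510.10143 — 8 statements merged into one kernel-verified Lean document; each statement's English description precedes it below -/
import Mathlib

section
/- Let D(z,λ) = h₀(λ) + ∑_{i=1}^d (z_i + z_i⁻¹)·h_i(λ) be a minimally sparse dispersion polynomial. Then at least one of the following holds: (1) there exists λ₀ ∈ ℂ with h_i(λ₀) = 0 for every i = 0,1,…,d (the dispersion relation has a flat band); (2) there exist a nonempty proper subset I ⊊ {1,…,d}, signs ε_j ∈ {−1,1} for j ∉ I, and λ₀ ∈ ℂ such that h_i(λ₀) = 0 for all i ∈ I and h₀(λ₀) + ∑_{j∉I} 2·ε_j·h_j(λ₀) = 0 (a coordinate projection has a flat band); (3) every critical point (x,λ₀) of D has x a corner point. -/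
/-!
Differentiating in one coordinate gives `∂D/∂z_i = (1 - z_i⁻²) h_i(λ)`, so at a critical point
`(x, λ₀)` every `h_i` with `x_i² ≠ 1` vanishes at `λ₀`, while every corner coordinate satisfies
`x_j + x_j⁻¹ = 2 x_j`. With `I = {i | x_i² ≠ 1}`, the equation `D(x, λ₀) = 0` therefore becomes
`h₀(λ₀) + ∑_{j ∉ I} 2 x_j h_j(λ₀) = 0`: a flat band if `I` is everything, a flat band of a
coordinate projection with signs `ε = x` otherwise.
-/

/-- The minimally sparse dispersion polynomial
`D(z,λ) = h₀(λ) + ∑_{i=1}^d (z_i + z_i⁻¹)·h_i(λ)`. -/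
noncomputable def Dms (d : ℕ) (h0 : Polynomial ℂ) (h : Fin d → Polynomial ℂ)
    (z : Fin d → ℂ) (lam : ℂ) : ℂ :=
  Polynomial.eval lam h0 + ∑ i, (z i + (z i)⁻¹) * Polynomial.eval lam (h i)

open Polynomial

lemma add_inv_eq_two_mul_of_sq_eq_one {K : Type*} [DivisionRing K] {z : K}
    (hz : z ^ 2 = 1) : z + z⁻¹ = 2 * z := by
  rw [inv_eq_of_mul_eq_one_right (by rw [← sq, hz]), two_mul]

section
variable {d : ℕ} (h0 : ℂ[X]) (h : Fin d → ℂ[X]) (x : Fin d → ℂ) (lam : ℂ)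

lemma Dms_update_eq (i : Fin d) (t : ℂ) :
    Dms d h0 h (Function.update x i t) lam =
      (t + t⁻¹) * (h i).eval lam + (Dms d h0 h x lam - (x i + (x i)⁻¹) * (h i).eval lam) := by
  simp only [Dms, ← Finset.add_sum_erase _ _ (Finset.mem_univ i), Function.update_self]
  rw [Finset.sum_congr rfl fun j hj => by rw [Function.update_of_ne (Finset.ne_of_mem_erase hj)]]
  ring

lemma hasDerivAt_Dms_update {i : Fin d} {t : ℂ} (ht : t ≠ 0) :
    HasDerivAt (fun s => Dms d h0 h (Function.update x i s) lam)
      ((1 - (t ^ 2)⁻¹) * (h i).eval lam) t := by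
  simp only [Dms_update_eq, sub_eq_add_neg (1 : ℂ)]
  exact (((hasDerivAt_id t).add (hasDerivAt_inv ht)).mul_const _).add_const _

variable {h0 h x lam}

lemma eval_eq_zero_of_deriv_Dms_update_eq_zero {i : Fin d} (hx : x i ≠ 0) (hx1 : x i ^ 2 ≠ 1)
    (hcrit : deriv (fun t => Dms d h0 h (Function.update x i t) lam) (x i) = 0) :
    (h i).eval lam = 0 := by
  rw [(hasDerivAt_Dms_update h0 h x lam hx).deriv] at hcrit
  refine (mul_eq_zero.mp hcrit).resolve_left fun h1 => hx1 ?_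
  exact inv_eq_one.mp (sub_eq_zero.mp h1).symm

lemma Dms_eq_of_sq_eq_one_off {I : Finset (Fin d)} (hI : ∀ i ∈ I, (h i).eval lam = 0)
    (hIc : ∀ j ∉ I, x j ^ 2 = 1) :
    Dms d h0 h x lam = h0.eval lam + ∑ j ∈ Iᶜ, 2 * x j * (h j).eval lam := by
  rw [Dms, ← Finset.sum_add_sum_compl I, Finset.sum_eq_zero fun i hi => by rw [hI i hi, mul_zero],
    zero_add]
  refine congrArg _ (Finset.sum_congr rfl fun j hj => ?_)
  rw [add_inv_eq_two_mul_of_sq_eq_one (hIc j (Finset.mem_compl.mp hj))]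

end

theorem stmt_0_general (d : ℕ) (h0 : Polynomial ℂ) (h : Fin d → Polynomial ℂ) :
    -- (1) the dispersion relation has a flat band
    (∃ lam0 : ℂ, Polynomial.eval lam0 h0 = 0 ∧ ∀ i, Polynomial.eval lam0 (h i) = 0) ∨
    -- (2) a coordinate projection has a flat band
    (∃ (I : Finset (Fin d)) (ε : Fin d → ℂ) (lam0 : ℂ),
      I.Nonempty ∧ I ≠ Finset.univ ∧
      (∀ j ∉ I, ε j = 1 ∨ ε j = -1) ∧
      (∀ i ∈ I, Polynomial.eval lam0 (h i) = 0) ∧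
      Polynomial.eval lam0 h0 + ∑ j ∈ Iᶜ, 2 * ε j * Polynomial.eval lam0 (h j) = 0) ∨
    -- (3) every critical point (x, λ₀) of D has x a corner point
    (∀ (x : Fin d → ℂ) (lam0 : ℂ), (∀ i, x i ≠ 0) →
      Dms d h0 h x lam0 = 0 →
      (∀ i, deriv (fun t => Dms d h0 h (Function.update x i t) lam0) (x i) = 0) →
      ∀ i, (x i) ^ 2 = 1) := by
  by_cases hcorner : ∀ (x : Fin d → ℂ) (lam0 : ℂ), (∀ i, x i ≠ 0) →
      Dms d h0 h x lam0 = 0 →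
      (∀ i, deriv (fun t => Dms d h0 h (Function.update x i t) lam0) (x i) = 0) →
      ∀ i, (x i) ^ 2 = 1
  · exact .inr (.inr hcorner)
  push Not at hcorner
  obtain ⟨x, lam, hx, hD, hcrit, i₀, hi₀⟩ := hcorner
  set I := Finset.univ.filter fun i => x i ^ 2 ≠ 1
  have hI : ∀ i ∈ I, (h i).eval lam = 0 := fun i hi =>
    eval_eq_zero_of_deriv_Dms_update_eq_zero (hx i) ((Finset.mem_filter_univ i).mp hi) (hcrit i)
  have hIc : ∀ j ∉ I, x j ^ 2 = 1 := fun j hj =>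
    by_contra fun hj' => hj ((Finset.mem_filter_univ _).mpr hj')
  rw [Dms_eq_of_sq_eq_one_off hI hIc] at hD
  by_cases hIu : I = Finset.univ
  · exact .inl ⟨lam, by simpa [hIu] using hD, fun i => hI i (hIu ▸ Finset.mem_univ i)⟩
  · exact .inr (.inl ⟨I, x, lam, ⟨i₀, (Finset.mem_filter_univ _).mpr hi₀⟩, hIu,
      fun j hj => sq_eq_one_iff.mp (hIc j hj), hI, hD⟩)

/-- Trichotomy for minimally sparse dispersion polynomials:
(1) a flat band; or (2) a coordinate projection has a flat band; or
(3) every critical point of `D` occurs at a corner point. -/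
theorem stmt_0 (d : ℕ) (hd : 1 ≤ d) (h0 : Polynomial ℂ) (h : Fin d → Polynomial ℂ) :
    -- (1) the dispersion relation has a flat band
    (∃ lam0 : ℂ, Polynomial.eval lam0 h0 = 0 ∧ ∀ i, Polynomial.eval lam0 (h i) = 0) ∨
    -- (2) a coordinate projection has a flat band
    (∃ (I : Finset (Fin d)) (ε : Fin d → ℂ) (lam0 : ℂ),
      I.Nonempty ∧ I ≠ Finset.univ ∧
      (∀ j ∉ I, ε j = 1 ∨ ε j = -1) ∧
      (∀ i ∈ I, Polynomial.eval lam0 (h i) = 0) ∧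
      Polynomial.eval lam0 h0 + ∑ j ∈ Iᶜ, 2 * ε j * Polynomial.eval lam0 (h j) = 0) ∨
    -- (3) every critical point (x, λ₀) of D has x a corner point
    (∀ (x : Fin d → ℂ) (lam0 : ℂ), (∀ i, x i ≠ 0) →
      Dms d h0 h x lam0 = 0 →
      (∀ i, deriv (fun t => Dms d h0 h (Function.update x i t) lam0) (x i) = 0) →
      ∀ i, (x i) ^ 2 = 1) :=
  stmt_0_general d h0 h
end

section
/- Let D(z,λ) = h₀(λ) + ∑_{i=1}^d (z_i + z_i⁻¹)·h_i(λ) be a minimally sparse dispersion polynomial, and suppose (x,λ₀) is a critical point of D such that x is not a corner point. Let I = {i : x_i² ≠ 1} (a nonempty set). Then h_i(λ₀) = 0 for every i ∈ I, and h₀(λ₀) + ∑_{j∉I} 2·x_j·h_j(λ₀) = 0; consequently D(y,λ₀) = 0 for every y ∈ (ℂ∖{0})^d with y_j = x_j for all j ∉ I, i.e. the coordinate projection obtained by freezing z_j = x_j for j ∉ I has a flat band at λ₀. -/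
lemma deriv_aux (a c : ℂ) (x : ℂ) (hx : x ≠ 0) :
    deriv (fun t : ℂ => c + (t + t⁻¹) * a) x = (1 - (x ^ 2)⁻¹) * a := by
  have h1 : HasDerivAt (fun t : ℂ => c + (t + t⁻¹) * a) ((1 + -(x ^ 2)⁻¹) * a) x :=
    (((hasDerivAt_id x).add (hasDerivAt_inv hx)).mul_const a).const_add c
  rw [h1.deriv]; ring

/-- If `(x,λ₀)` is a critical point of a minimally sparse dispersion polynomial and `x` is
not a corner point, then with `I = {i : x_i² ≠ 1}` (nonempty) we have `h_i(λ₀) = 0` for all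
`i ∈ I`, the relation `h₀(λ₀) + ∑_{j∉I} 2·x_j·h_j(λ₀) = 0` holds, and the coordinate
projection freezing `z_j = x_j` for `j ∉ I` has a flat band at `λ₀`. -/
theorem stmt_1 (d : ℕ) (hd : 1 ≤ d) (h0 : Polynomial ℂ) (h : Fin d → Polynomial ℂ)
    (x : Fin d → ℂ) (lam0 : ℂ) (hx : ∀ i, x i ≠ 0)
    -- (x, λ₀) is a critical point of D
    (hcrit0 : Dms d h0 h x lam0 = 0)
    (hcrit : ∀ i, deriv (fun t => Dms d h0 h (Function.update x i t) lam0) (x i) = 0)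
    -- x is not a corner point, i.e. I = {i : x_i² ≠ 1} is nonempty
    (hnotcorner : ∃ i, (x i) ^ 2 ≠ 1) :
    -- h_i(λ₀) = 0 for every i ∈ I
    (∀ i, (x i) ^ 2 ≠ 1 → Polynomial.eval lam0 (h i) = 0) ∧
    -- h₀(λ₀) + ∑_{j ∉ I} 2·x_j·h_j(λ₀) = 0
    (Polynomial.eval lam0 h0
      + ∑ j, (if (x j) ^ 2 = 1 then 2 * x j * Polynomial.eval lam0 (h j) else 0) = 0) ∧
    -- the coordinate projection freezing z_j = x_j for j ∉ I has a flat band at λ₀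
    (∀ y : Fin d → ℂ, (∀ i, y i ≠ 0) → (∀ j, (x j) ^ 2 = 1 → y j = x j) →
      Dms d h0 h y lam0 = 0) := by
  have hvanish : ∀ i, (x i) ^ 2 ≠ 1 → Polynomial.eval lam0 (h i) = 0 := by
    intro i hi
    have hfun : (fun t => Dms d h0 h (Function.update x i t) lam0)
        = fun t : ℂ => (Polynomial.eval lam0 h0
            + ∑ j ∈ Finset.univ.erase i, (x j + (x j)⁻¹) * Polynomial.eval lam0 (h j))
          + (t + t⁻¹) * Polynomial.eval lam0 (h i) := by
      funext t
      unfold Dms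
      rw [← Finset.add_sum_erase _ _ (Finset.mem_univ i), Function.update_self]
      have : ∀ j ∈ Finset.univ.erase i,
          (Function.update x i t j + (Function.update x i t j)⁻¹) * Polynomial.eval lam0 (h j)
          = (x j + (x j)⁻¹) * Polynomial.eval lam0 (h j) := by
        intro j hj
        rw [Function.update_of_ne (Finset.ne_of_mem_erase hj)]
      rw [Finset.sum_congr rfl this]
      ring
    have hc := hcrit i
    rw [hfun, deriv_aux _ _ _ (hx i)] at hc
    have hne : (1 - ((x i) ^ 2)⁻¹) ≠ 0 := by
      intro hz
      apply hi
      have h2 : ((x i) ^ 2)⁻¹ = 1 := by linear_combination -hz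
      have := pow_ne_zero 2 (hx i)
      field_simp at h2
      rw [div_eq_one_iff_eq this] at h2
      exact h2.symm
    exact (mul_eq_zero.mp hc).resolve_left hne
  have hterm : ∀ j, (x j + (x j)⁻¹) * Polynomial.eval lam0 (h j)
      = (if (x j) ^ 2 = 1 then 2 * x j * Polynomial.eval lam0 (h j) else 0) := by
    intro j
    by_cases hj : (x j) ^ 2 = 1
    · rw [if_pos hj]
      have hinv : (x j)⁻¹ = x j :=
        inv_eq_of_mul_eq_one_right (by linear_combination hj)
      rw [hinv]; ring
    · rw [if_neg hj, hvanish j hj, mul_zero]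
  have hsum : Polynomial.eval lam0 h0
      + ∑ j, (if (x j) ^ 2 = 1 then 2 * x j * Polynomial.eval lam0 (h j) else 0) = 0 := by
    rw [← Finset.sum_congr rfl (fun j _ => hterm j)]
    exact hcrit0
  refine ⟨hvanish, hsum, ?_⟩
  intro y hy hyx
  have : ∀ j ∈ Finset.univ, (y j + (y j)⁻¹) * Polynomial.eval lam0 (h j)
      = (if (x j) ^ 2 = 1 then 2 * x j * Polynomial.eval lam0 (h j) else 0) := by
    intro j _
    by_cases hj : (x j) ^ 2 = 1
    · rw [if_pos hj, hyx j hj]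
      have hinv : (x j)⁻¹ = x j :=
        inv_eq_of_mul_eq_one_right (by linear_combination hj)
      rw [hinv]; ring
    · rw [if_neg hj, hvanish j hj, mul_zero]
  unfold Dms
  rw [Finset.sum_congr rfl this]
  exact hsum
end

section
/- Let F be a labeled annotated flower graph with Floquet matrix H(z). Then every monomial z^α (α ∈ ℤ^d) appearing with a nonzero coefficient in det(H(z) − λ·Id) — viewed as a polynomial in λ whose coefficients are real Laurent polynomials in z₁,…,z_d — satisfies α = 0 or α = e_i or α = −e_i for some standard basis vector e_i of ℤ^d. (Periodic flower graphs are minimally sparse.) -/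
/-- A labeled annotated flower graph: a finite vertex set `W` with distinguished vertex `u`,
a finite edge set `K` (parallel edges allowed, loops only at `u`), petals `P₁,…,P_ℓ`
(loops at `u` or cycles through `u`), an annotation `ann : [ℓ] → [d]` together with a
distinguished oriented edge in each petal, and labels `V : W → ℝ`, `E : K → ℝ`. -/
structure FlowerGraph (d : ℕ) : Type 1 where
  /-- vertex set -/
  W : Type
  fintypeW : Fintype W
  decEqW : DecidableEq W
  /-- distinguished vertex -/
  u : W
  /-- edge set -/
  K : Type
  fintypeK : Fintype K
  decEqK : DecidableEq K
  /-- endpoints of an edge, as an unordered pair -/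
  ends : K → Sym2 W
  /-- loops are allowed only at `u` -/
  loops_only_at_u : ∀ e, (ends e).IsDiag → ends e = Sym2.diag u
  /-- number of petals -/
  numPetals : ℕ
  numPetals_pos : 1 ≤ numPetals
  /-- length of each petal (1 = a loop petal at `u`) -/
  len : Fin numPetals → ℕ
  len_pos : ∀ i, 1 ≤ len i
  /-- the vertices of petal `i`, in cyclic order, starting and ending at `u` -/
  vtx : (i : Fin numPetals) → Fin (len i + 1) → W
  vtx_zero : ∀ i, vtx i 0 = u
  vtx_last : ∀ i, vtx i (Fin.last (len i)) = u
  /-- the edges of petal `i` -/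
  petalEdge : (i : Fin numPetals) → Fin (len i) → K
  petalEdge_ends : ∀ i j, ends (petalEdge i j) = s(vtx i (Fin.castSucc j), vtx i (Fin.succ j))
  /-- all petal edges are distinct (petals are pairwise edge-disjoint cycles) -/
  petalEdge_inj : Function.Injective fun p : Σ i : Fin numPetals, Fin (len i) => petalEdge p.1 p.2
  /-- interior petal vertices differ from `u` -/
  interior_ne_u : ∀ i j, j ≠ 0 → j ≠ Fin.last (len i) → vtx i j ≠ u
  /-- interior vertices of a petal are distinct -/
  interior_inj : ∀ i, ∀ j j' : Fin (len i + 1), j ≠ 0 → j ≠ Fin.last (len i) →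
    j' ≠ 0 → j' ≠ Fin.last (len i) → vtx i j = vtx i j' → j = j'
  /-- interior vertex sets of distinct petals are disjoint -/
  interior_disjoint : ∀ i i' j j', i ≠ i' → j ≠ 0 → j ≠ Fin.last (len i) →
    j' ≠ 0 → j' ≠ Fin.last (len i') → vtx i j ≠ vtx i' j'
  /-- interior petal vertices are incident to no edges outside their own petal -/
  interior_incident : ∀ (e : K) i j, j ≠ 0 → j ≠ Fin.last (len i) → vtx i j ∈ ends e →
    ∃ j', e = petalEdge i j'
  /-- stem edges are loop-free -/
  stem_loopfree : ∀ e, (∀ i j, e ≠ petalEdge i j) → ¬ (ends e).IsDiag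
  /-- stem edges join vertices that are not interior to any petal -/
  stem_not_interior : ∀ e, (∀ i j, e ≠ petalEdge i j) →
    ∀ i j, j ≠ 0 → j ≠ Fin.last (len i) → vtx i j ∉ ends e
  /-- the annotation -/
  ann : Fin numPetals → Fin d
  /-- index of the distinguished edge of each petal -/
  dIdx : (i : Fin numPetals) → Fin (len i)
  /-- orientation of the distinguished edge -/
  orient : Fin numPetals → Bool
  /-- the potential -/
  V : W → ℝ
  /-- the edge labels -/
  E : K → ℝ

attribute [instance] FlowerGraph.fintypeW FlowerGraph.decEqW
  FlowerGraph.fintypeK FlowerGraph.decEqK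

namespace FlowerGraph

variable {d : ℕ} (F : FlowerGraph d)

/-- The initial vertex `aᵢ` of the distinguished oriented edge `aᵢ → bᵢ` of petal `i`. -/
def distHead (i : Fin F.numPetals) : F.W :=
  if F.orient i then F.vtx i (Fin.castSucc (F.dIdx i)) else F.vtx i (Fin.succ (F.dIdx i))

/-- The final vertex `bᵢ` of the distinguished oriented edge `aᵢ → bᵢ` of petal `i`. -/
def distTail (i : Fin F.numPetals) : F.W :=
  if F.orient i then F.vtx i (Fin.succ (F.dIdx i)) else F.vtx i (Fin.castSucc (F.dIdx i))

/-- The contribution of the edge `e` to the `(v,v')` entry of the Floquet matrix, an element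
of the Laurent polynomial ring `ℝ[z₁^{±1},…,z_d^{±1}] = AddMonoidAlgebra ℝ (Fin d → ℤ)`. -/
noncomputable def edgeTerm (v v' : F.W) (e : F.K) : AddMonoidAlgebra ℝ (Fin d → ℤ) := by
  classical
  exact
    if F.ends e = s(v, v') then
      (if hpe : ∃ i, e = F.petalEdge i (F.dIdx i) then
        (if F.len hpe.choose = 1 then
          -- a loop petal contributes (z + z⁻¹)·E(e)
          AddMonoidAlgebra.single (Pi.single (F.ann hpe.choose) (1 : ℤ)) (F.E e)
            + AddMonoidAlgebra.single (Pi.single (F.ann hpe.choose) (-1 : ℤ)) (F.E e)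
        else if v = F.distHead hpe.choose ∧ v' = F.distTail hpe.choose then
          -- the distinguished edge oriented v → v' contributes z·E(e)
          AddMonoidAlgebra.single (Pi.single (F.ann hpe.choose) (1 : ℤ)) (F.E e)
        else if v' = F.distHead hpe.choose ∧ v = F.distTail hpe.choose then
          -- the distinguished edge oriented v' → v contributes z⁻¹·E(e)
          AddMonoidAlgebra.single (Pi.single (F.ann hpe.choose) (-1 : ℤ)) (F.E e)
        else AddMonoidAlgebra.single 0 (F.E e))
      else
        -- a non-distinguished edge contributes the constant E(e)
        AddMonoidAlgebra.single 0 (F.E e))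
    else 0

/-- The Floquet matrix of a labeled annotated flower graph, a `W × W` matrix over the
Laurent polynomial ring `ℝ[z₁^{±1},…,z_d^{±1}]`. -/
noncomputable def floquet : Matrix F.W F.W (AddMonoidAlgebra ℝ (Fin d → ℤ)) :=
  Matrix.of fun v v' =>
    (if v = v' then AddMonoidAlgebra.single 0 (F.V v) else 0) + ∑ e : F.K, F.edgeTerm v v' e

end FlowerGraph
namespace FlowerGraphAux
open Polynomial
variable {d : ℕ} (F : FlowerGraph d)

lemma vtx_eq_u {i} {j : Fin (F.len i + 1)} (h : F.vtx i j = F.u) :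
    j = 0 ∨ j = Fin.last (F.len i) := by
  by_contra hc
  push_neg at hc
  exact F.interior_ne_u i j hc.1 hc.2 h

lemma fin_ne_zero_iff {n : ℕ} (j : Fin (n + 1)) : j ≠ 0 ↔ j.val ≠ 0 := by
  rw [Ne, Fin.ext_iff, Fin.val_zero]

lemma fin_ne_last_iff {n : ℕ} (j : Fin (n + 1)) : j ≠ Fin.last n ↔ j.val ≠ n := by
  simp [Fin.ext_iff]

lemma sneg (j : Fin d) : (Pi.single j (-1 : ℤ) : Fin d → ℤ) = - Pi.single j 1 := by
  funext x
  by_cases h : x = j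
  · subst h; simp
  · simp [Pi.single_eq_of_ne h]

lemma single_one_ne_zero (j : Fin d) : (Pi.single j (1 : ℤ) : Fin d → ℤ) ≠ 0 := by
  intro h
  have := congrFun h j
  simp at this

/-- the two endpoints of the distinguished edge of a non-loop petal are distinct -/
lemma AB_ne {i} (h2 : 2 ≤ F.len i) :
    F.vtx i (Fin.castSucc (F.dIdx i)) ≠ F.vtx i (Fin.succ (F.dIdx i)) := by
  have hdl : (F.dIdx i).val < F.len i := (F.dIdx i).isLt
  intro h
  by_cases hcu : F.vtx i (Fin.castSucc (F.dIdx i)) = F.u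
  · rcases vtx_eq_u F hcu with h0 | hl
    · have h0' : (F.dIdx i).val = 0 := by
        simpa [Fin.ext_iff] using h0
      rcases vtx_eq_u F (h ▸ hcu) with hs0 | hsl
      · simp [Fin.ext_iff] at hs0
      · have : (F.dIdx i).val + 1 = F.len i := by simpa [Fin.ext_iff] using hsl
        omega
    · have : (F.dIdx i).val = F.len i := by simpa [Fin.ext_iff] using hl
      omega
  · have hsu : F.vtx i (Fin.succ (F.dIdx i)) ≠ F.u := fun hh => hcu (h ▸ hh)
    have hc0 : Fin.castSucc (F.dIdx i) ≠ 0 := by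
      intro hh; exact hcu (hh ▸ F.vtx_zero i)
    have hcl : Fin.castSucc (F.dIdx i) ≠ Fin.last (F.len i) := by
      rw [fin_ne_last_iff]; simp; omega
    have hs0 : Fin.succ (F.dIdx i) ≠ 0 := by
      rw [fin_ne_zero_iff]; simp
    have hsl : Fin.succ (F.dIdx i) ≠ Fin.last (F.len i) := by
      intro hh; exact hsu (hh ▸ F.vtx_last i)
    have := F.interior_inj i _ _ hc0 hcl hs0 hsl h
    simp [Fin.ext_iff] at this

lemma ht_sym2 (i : Fin F.numPetals) :
    s(F.distHead i, F.distTail i)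
      = s(F.vtx i (Fin.castSucc (F.dIdx i)), F.vtx i (Fin.succ (F.dIdx i))) := by
  unfold FlowerGraph.distHead FlowerGraph.distTail
  by_cases h : F.orient i <;> simp [h, Sym2.eq_swap]

lemma ht_ne {i} (h2 : 2 ≤ F.len i) : F.distHead i ≠ F.distTail i := by
  unfold FlowerGraph.distHead FlowerGraph.distTail
  by_cases h : F.orient i <;> simp [h]
  · exact AB_ne F h2
  · exact (AB_ne F h2).symm

/-- an endpoint of the distinguished edge which is not `u` is interior -/
lemma mem_ht_interior {i} (x : F.W)
    (hx : x = F.distHead i ∨ x = F.distTail i) (hxu : x ≠ F.u) :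
    ∃ m : Fin (F.len i + 1), m ≠ 0 ∧ m ≠ Fin.last (F.len i) ∧ x = F.vtx i m := by
  have hcs : x = F.vtx i (Fin.castSucc (F.dIdx i)) ∨ x = F.vtx i (Fin.succ (F.dIdx i)) := by
    unfold FlowerGraph.distHead FlowerGraph.distTail at hx
    by_cases h : F.orient i <;> simp [h] at hx <;> tauto
  rcases hcs with h | h
  · refine ⟨Fin.castSucc (F.dIdx i), ?_, ?_, h⟩
    · intro hh; rw [hh, F.vtx_zero] at h; exact hxu h
    · rw [fin_ne_last_iff]; simp; exact (F.dIdx i).isLt.ne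
  · refine ⟨Fin.succ (F.dIdx i), ?_, ?_, h⟩
    · rw [fin_ne_zero_iff]; simp
    · intro hh; rw [hh, F.vtx_last] at h; exact hxu h

/-- classification of exponents appearing in an entry of the Floquet matrix -/
def EC (v v' : F.W) (α : Fin d → ℤ) : Prop :=
  α = 0 ∨
  (v = F.u ∧ v' = F.u ∧ ∃ i, (α = Pi.single (F.ann i) 1 ∨ α = Pi.single (F.ann i) (-1))) ∨
  (∃ i, 2 ≤ F.len i ∧
    ((α = Pi.single (F.ann i) 1 ∧ v = F.distHead i ∧ v' = F.distTail i) ∨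
     (α = Pi.single (F.ann i) (-1) ∧ v = F.distTail i ∧ v' = F.distHead i)))

lemma ec_of_mem_edgeTerm {v v' : F.W} {e : F.K} {α : Fin d → ℤ}
    (h : α ∈ (F.edgeTerm v v' e).coeff.support) : EC F v v' α := by
  classical
  unfold FlowerGraph.edgeTerm at h
  split_ifs at h with h1 hpe hlen hht hth
  · -- loop petal. First: v = u and v' = u
    set ch := hpe.choose with hch
    have hsp : e = F.petalEdge ch (F.dIdx ch) := hpe.choose_spec
    have hends : F.ends e = s(F.vtx ch (Fin.castSucc (F.dIdx ch)), F.vtx ch (Fin.succ (F.dIdx ch))) := by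
      rw [hsp, F.petalEdge_ends]
    have hc0 : F.vtx ch (Fin.castSucc (F.dIdx ch)) = F.u := by
      have : Fin.castSucc (F.dIdx ch) = (0 : Fin (F.len ch + 1)) := by
        have := (F.dIdx ch).isLt
        rw [Fin.ext_iff]
        simp
        omega
      rw [this, F.vtx_zero]
    have hcl : F.vtx ch (Fin.succ (F.dIdx ch)) = F.u := by
      have : Fin.succ (F.dIdx ch) = Fin.last (F.len ch) := by
        have := (F.dIdx ch).isLt
        rw [Fin.ext_iff]
        simp
        omega
      rw [this, F.vtx_last]
    rw [hc0, hcl, h1] at hends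
    have huv : v = F.u ∧ v' = F.u := by
      rcases Sym2.eq_iff.mp hends with ⟨a, b⟩ | ⟨a, b⟩ <;> exact ⟨a, b⟩
    have hα : α = Pi.single (F.ann ch) 1 ∨ α = Pi.single (F.ann ch) (-1) := by
      have := Finsupp.support_add h
      rcases Finset.mem_union.mp this with hh | hh
      · exact Or.inl (Finset.mem_singleton.mp (Finsupp.support_single_subset hh))
      · exact Or.inr (Finset.mem_singleton.mp (Finsupp.support_single_subset hh))
    exact Or.inr (Or.inl ⟨huv.1, huv.2, ch, hα⟩)
  · -- distinguished edge, +1 orientation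
    have hα : α = Pi.single (F.ann hpe.choose) 1 :=
      Finset.mem_singleton.mp (Finsupp.support_single_subset h)
    refine Or.inr (Or.inr ⟨hpe.choose, ?_, Or.inl ⟨hα, hht.1, hht.2⟩⟩)
    have := F.len_pos hpe.choose
    omega
  · -- distinguished edge, -1 orientation
    have hα : α = Pi.single (F.ann hpe.choose) (-1) :=
      Finset.mem_singleton.mp (Finsupp.support_single_subset h)
    refine Or.inr (Or.inr ⟨hpe.choose, ?_, Or.inr ⟨hα, hth.2, hth.1⟩⟩)
    have := F.len_pos hpe.choose
    omega
  · exact Or.inl (Finset.mem_singleton.mp (Finsupp.support_single_subset h))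
  · exact Or.inl (Finset.mem_singleton.mp (Finsupp.support_single_subset h))
  · simp at h

/-- The characteristic-type matrix `H(z) - λ·Id`. -/
noncomputable def Mmat : Matrix F.W F.W (Polynomial (AddMonoidAlgebra ℝ (Fin d → ℤ))) :=
  F.floquet.map Polynomial.C
    - (Polynomial.X : Polynomial (AddMonoidAlgebra ℝ (Fin d → ℤ))) • 1

lemma Mmat_apply (v v' : F.W) :
    Mmat F v v' = Polynomial.C (F.floquet v v')
      - (if v = v' then (Polynomial.X : Polynomial (AddMonoidAlgebra ℝ (Fin d → ℤ))) else 0) := by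
  classical
  simp only [Mmat, Matrix.sub_apply, Matrix.map_apply, Matrix.smul_apply, Matrix.one_apply]
  split_ifs <;> simp

lemma ec_of_mem_floquet {v v' : F.W} {α : Fin d → ℤ}
    (h : α ∈ (F.floquet v v').coeff.support) : EC F v v' α := by
  classical
  rw [FlowerGraph.floquet, Matrix.of_apply] at h
  rcases Finset.mem_union.mp (Finsupp.support_add h) with hh | hh
  · left
    split_ifs at hh
    · exact Finset.mem_singleton.mp (Finsupp.support_single_subset hh)
    · simp at hh
  · rcases Finset.mem_biUnion.mp (Finsupp.support_finset_sum (by change α ∈ (∑ e, F.edgeTerm v v' e).coeff.support at hh; rwa [AddMonoidAlgebra.coeff_sum] at hh)) with ⟨e, _, he⟩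
    exact ec_of_mem_edgeTerm F he

lemma ec_of_mem_M {v v' : F.W} {α : Fin d → ℤ} {m : ℕ}
    (h : α ∈ ((Mmat F v v').coeff m).coeff.support) : EC F v v' α := by
  classical
  rw [Mmat_apply, Polynomial.coeff_sub] at h
  rcases Finset.mem_union.mp (Finsupp.support_sub h) with hh | hh
  · rw [Polynomial.coeff_C] at hh
    split_ifs at hh
    · exact ec_of_mem_floquet F hh
    · simp at hh
  · left
    split_ifs at hh
    · rw [Polynomial.coeff_X] at hh
      split_ifs at hh
      · simpa using Finset.mem_singleton.mp
          (Finsupp.support_single_subset (by rw [AddMonoidAlgebra.one_def] at hh; exact hh))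
      · simp at hh
    · simp at hh

lemma adj_of_mem_M {v v' : F.W} {α : Fin d → ℤ} {m : ℕ} (hne : v ≠ v')
    (h : α ∈ ((Mmat F v v').coeff m).coeff.support) : ∃ e, F.ends e = s(v, v') := by
  classical
  rw [Mmat_apply, if_neg hne, sub_zero, Polynomial.coeff_C] at h
  split_ifs at h with hm
  · rw [FlowerGraph.floquet, Matrix.of_apply, if_neg hne, zero_add] at h
    rcases Finset.mem_biUnion.mp (Finsupp.support_finset_sum (by rwa [AddMonoidAlgebra.coeff_sum] at h)) with ⟨e, _, he⟩
    refine ⟨e, ?_⟩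
    by_contra hee
    unfold FlowerGraph.edgeTerm at he
    rw [if_neg hee] at he
    simp at he
  · simp at h

/-- If both endpoints of the distinguished edge of petal `i` are interior, the
entries of `Mmat` on this pair of vertices have sharply determined supports. -/
lemma sharp {i} (h2 : 2 ≤ F.len i)
    (hA : F.vtx i (Fin.castSucc (F.dIdx i)) ≠ F.u)
    (hB : F.vtx i (Fin.succ (F.dIdx i)) ≠ F.u)
    {v v' : F.W}
    (hvv : s(v, v') = s(F.vtx i (Fin.castSucc (F.dIdx i)), F.vtx i (Fin.succ (F.dIdx i))))
    {m : ℕ} {α : Fin d → ℤ} (h : α ∈ ((Mmat F v v').coeff m).coeff.support) :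
    (v = F.distHead i ∧ v' = F.distTail i ∧ α = Pi.single (F.ann i) 1) ∨
    (v = F.distTail i ∧ v' = F.distHead i ∧ α = Pi.single (F.ann i) (-1)) := by
  classical
  have hAB := AB_ne F h2
  have hcase := Sym2.eq_iff.mp hvv
  have hne : v ≠ v' := by
    rcases hcase with ⟨h1, h1'⟩ | ⟨h1, h1'⟩ <;> rw [h1, h1'] <;>
      [exact hAB; exact hAB.symm]
  -- interiority of the two indices
  have hc0 : Fin.castSucc (F.dIdx i) ≠ 0 := fun hh => hA (by rw [hh, F.vtx_zero])
  have hcl : Fin.castSucc (F.dIdx i) ≠ Fin.last (F.len i) := by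
    rw [fin_ne_last_iff]; simp; exact (F.dIdx i).isLt.ne
  have hs0 : Fin.succ (F.dIdx i) ≠ 0 := by rw [fin_ne_zero_iff]; simp
  have hsl : Fin.succ (F.dIdx i) ≠ Fin.last (F.len i) :=
    fun hh => hB (by rw [hh, F.vtx_last])
  rw [Mmat_apply, if_neg hne, sub_zero, Polynomial.coeff_C] at h
  split_ifs at h with hm
  swap
  · simp at h
  rw [FlowerGraph.floquet, Matrix.of_apply, if_neg hne, zero_add] at h
  rcases Finset.mem_biUnion.mp (Finsupp.support_finset_sum (by rwa [AddMonoidAlgebra.coeff_sum] at h)) with ⟨e, _, he⟩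
  by_cases h1 : F.ends e = s(v, v')
  swap
  · unfold FlowerGraph.edgeTerm at he; rw [if_neg h1] at he; simp at he
  -- identify `e` as the distinguished edge of petal `i`
  have hE : e = F.petalEdge i (F.dIdx i) := by
    have hvmem : v ∈ F.ends e := by rw [h1]; exact Sym2.mem_mk_left v v'
    have hvint : ∃ mv : Fin (F.len i + 1), mv ≠ 0 ∧ mv ≠ Fin.last (F.len i) ∧ v = F.vtx i mv := by
      rcases hcase with ⟨hv, _⟩ | ⟨hv, _⟩
      · exact ⟨_, hc0, hcl, hv⟩
      · exact ⟨_, hs0, hsl, hv⟩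
    obtain ⟨mv, hm0, hml, hmv⟩ := hvint
    obtain ⟨j'', hj⟩ := F.interior_incident e i mv hm0 hml (by rw [← hmv]; exact hvmem)
    have hends : s(F.vtx i (Fin.castSucc j''), F.vtx i (Fin.succ j''))
        = s(F.vtx i (Fin.castSucc (F.dIdx i)), F.vtx i (Fin.succ (F.dIdx i))) := by
      rw [← F.petalEdge_ends, ← hj, h1]
      rcases hcase with ⟨hv, hv'⟩ | ⟨hv, hv'⟩
      · rw [hv, hv']
      · rw [hv, hv', Sym2.eq_swap]
    have hjl : (j'' : ℕ) < F.len i := j''.isLt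
    rcases Sym2.eq_iff.mp hends with ⟨ha, hb⟩ | ⟨ha, hb⟩
    · have hj0 : Fin.castSucc j'' ≠ 0 := fun hh => hA (by rw [← ha, hh, F.vtx_zero])
      have hjlast : Fin.castSucc j'' ≠ Fin.last (F.len i) := by
        rw [fin_ne_last_iff]; simp; omega
      have := F.interior_inj i _ _ hj0 hjlast hc0 hcl ha
      have : j'' = F.dIdx i := Fin.castSucc_inj.mp this
      rw [hj, this]
    · -- crossed matching: impossible
      have hj0 : Fin.castSucc j'' ≠ 0 := fun hh => hB (by rw [← ha, hh, F.vtx_zero])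
      have hjlast : Fin.castSucc j'' ≠ Fin.last (F.len i) := by
        rw [fin_ne_last_iff]; simp; omega
      have hq0 : Fin.succ j'' ≠ 0 := by rw [fin_ne_zero_iff]; simp
      have hqlast : Fin.succ j'' ≠ Fin.last (F.len i) :=
        fun hh => hA (by rw [← hb, hh, F.vtx_last])
      have e1 := F.interior_inj i _ _ hj0 hjlast hs0 hsl ha
      have e2 := F.interior_inj i _ _ hq0 hqlast hc0 hcl hb
      rw [Fin.ext_iff] at e1 e2
      simp at e1 e2
      omega
  have hpe : ∃ i', e = F.petalEdge i' (F.dIdx i') := ⟨i, hE⟩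
  have hch : hpe.choose = i := by
    have hs := hpe.choose_spec
    have heq : (fun p : Σ i' : Fin F.numPetals, Fin (F.len i') => F.petalEdge p.1 p.2)
        ⟨hpe.choose, F.dIdx hpe.choose⟩
        = (fun p : Σ i' : Fin F.numPetals, Fin (F.len i') => F.petalEdge p.1 p.2)
        ⟨i, F.dIdx i⟩ := hs.symm.trans hE
    exact congrArg Sigma.fst (F.petalEdge_inj heq)
  unfold FlowerGraph.edgeTerm at he
  rw [if_pos h1, dif_pos hpe] at he
  have hlen : ¬ (F.len hpe.choose = 1) := by rw [hch]; omega
  rw [if_neg hlen] at he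
  have hht2 : s(v, v') = s(F.distHead i, F.distTail i) := by
    rw [ht_sym2]; exact hvv
  split_ifs at he with hht hth
  · rw [hch] at hht
    have hα := Finset.mem_singleton.mp (Finsupp.support_single_subset he)
    rw [hch] at hα
    exact Or.inl ⟨hht.1, hht.2, hα⟩
  · rw [hch] at hth
    have hα := Finset.mem_singleton.mp (Finsupp.support_single_subset he)
    rw [hch] at hα
    exact Or.inr ⟨hth.2, hth.1, hα⟩
  · rw [hch] at hht hth
    rcases Sym2.eq_iff.mp hht2 with ⟨ha, hb⟩ | ⟨ha, hb⟩
    · exact absurd ⟨ha, hb⟩ hht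
    · exact absurd ⟨hb, ha⟩ hth

lemma pow_fix (σ : Equiv.Perm F.W) {x : F.W} (h : σ x = x) : ∀ n : ℕ, (σ ^ n) x = x := by
  intro n
  induction n with
  | zero => simp
  | succ n ih => rw [pow_succ, Equiv.Perm.mul_apply, h, ih]

lemma step (σ : Equiv.Perm F.W)
    (hadj : ∀ v : F.W, v ≠ σ v → ∃ e, F.ends e = s(v, σ v))
    (i : Fin F.numPetals) (m : Fin (F.len i + 1)) (h0 : m ≠ 0) (hl : m ≠ Fin.last (F.len i))
    (y : F.W) (hy : y = F.vtx i m) (hne : σ y ≠ y) (hnu : σ y ≠ F.u) :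
    ∃ m' : Fin (F.len i + 1), σ y = F.vtx i m' ∧ m' ≠ 0 ∧ m' ≠ Fin.last (F.len i) ∧
      ((m' : ℕ) = (m : ℕ) + 1 ∨ (m : ℕ) = (m' : ℕ) + 1) := by
  have hyu : y ≠ F.u := hy ▸ F.interior_ne_u i m h0 hl
  obtain ⟨e, he⟩ := hadj y (Ne.symm hne)
  have hymem : y ∈ F.ends e := by rw [he]; exact Sym2.mem_mk_left _ _
  obtain ⟨j'', hj⟩ := F.interior_incident e i m h0 hl (hy ▸ hymem)
  have hends : s(F.vtx i (Fin.castSucc j''), F.vtx i (Fin.succ j'')) = s(y, σ y) := by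
    rw [← F.petalEdge_ends, ← hj, he]
  have hjl : (j'' : ℕ) < F.len i := j''.isLt
  rcases Sym2.eq_iff.mp hends with ⟨ha, hb⟩ | ⟨ha, hb⟩
  · -- y = vtx (castSucc j''), σ y = vtx (succ j'')
    have hj0 : Fin.castSucc j'' ≠ 0 := fun hh => hyu (by rw [← ha, hh, F.vtx_zero])
    have hjlast : Fin.castSucc j'' ≠ Fin.last (F.len i) := by
      rw [fin_ne_last_iff]; simp; omega
    have hmm : m = Fin.castSucc j'' := F.interior_inj i _ _ h0 hl hj0 hjlast (hy.symm.trans ha.symm)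
    refine ⟨Fin.succ j'', hb.symm, ?_, ?_, ?_⟩
    · rw [fin_ne_zero_iff]; simp
    · intro hh; exact hnu (by rw [← hb, hh, F.vtx_last])
    · left; rw [hmm]; simp
  · -- σ y = vtx (castSucc j''), y = vtx (succ j'')
    have hq0 : Fin.succ j'' ≠ 0 := by rw [fin_ne_zero_iff]; simp
    have hqlast : Fin.succ j'' ≠ Fin.last (F.len i) := by
      intro hh; exact hyu (by rw [← hb, hh, F.vtx_last])
    have hmm : m = Fin.succ j'' := F.interior_inj i _ _ h0 hl hq0 hqlast (hy.symm.trans hb.symm)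
    refine ⟨Fin.castSucc j'', ha.symm, ?_, ?_, ?_⟩
    · intro hh; exact hnu (by rw [← ha, hh, F.vtx_zero])
    · rw [fin_ne_last_iff]; simp; omega
    · right; rw [hmm]; simp

lemma up (σ : Equiv.Perm F.W)
    (hadj : ∀ v : F.W, v ≠ σ v → ∃ e, F.ends e = s(v, σ v))
    (i : Fin F.numPetals) (x : F.W)
    (hu : ∀ n : ℕ, (σ ^ n) x ≠ F.u) (hxx : (σ ^ 2) x ≠ x)
    (m₀ m₁ : Fin (F.len i + 1)) (hm1 : (m₁ : ℕ) = (m₀ : ℕ) + 1)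
    (h1 : 0 < (m₀ : ℕ)) (h2 : (m₁ : ℕ) < F.len i)
    (hx : x = F.vtx i m₀) (hsx : σ x = F.vtx i m₁) : False := by
  have hone : σ x ≠ x := by
    intro hh
    exact hxx (by rw [sq, Equiv.Perm.mul_apply, hh, hh])
  have claim : ∀ n : ℕ, ∃ a b : Fin (F.len i + 1),
      (a : ℕ) = (m₀ : ℕ) + n ∧ (b : ℕ) = (a : ℕ) + 1 ∧ (b : ℕ) < F.len i ∧
      (σ ^ n) x = F.vtx i a ∧ (σ ^ (n + 1)) x = F.vtx i b := by
    intro n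
    induction n with
    | zero => exact ⟨m₀, m₁, by omega, by omega, h2, by simpa using hx, by simpa using hsx⟩
    | succ n ih =>
      obtain ⟨a, b, ha, hb, hblt, hxa, hxb⟩ := ih
      have hb0 : b ≠ 0 := by rw [fin_ne_zero_iff]; omega
      have hbl : b ≠ Fin.last (F.len i) := by rw [fin_ne_last_iff]; omega
      have hmove : σ ((σ ^ (n + 1)) x) ≠ (σ ^ (n + 1)) x := by
        intro hh
        exact hone (Equiv.injective (σ ^ (n + 1)) (by
          rw [← Equiv.Perm.mul_apply, ← pow_succ'] at hh
          rw [← Equiv.Perm.mul_apply, ← pow_succ]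
          exact hh))
      have hmu : σ ((σ ^ (n + 1)) x) ≠ F.u := by
        have := hu (n + 2)
        rw [show n + 2 = (n + 1) + 1 by omega, pow_succ', Equiv.Perm.mul_apply] at this
        exact this
      obtain ⟨b', hxb', hb'0, hb'l, hstep⟩ :=
        step F σ hadj i b hb0 hbl ((σ ^ (n + 1)) x) hxb (by
          intro hh; exact hmove hh) hmu
      rw [fin_ne_zero_iff] at hb'0
      rw [fin_ne_last_iff] at hb'l
      have hb'lt : (b' : ℕ) < F.len i := by have := b'.isLt; omega
      rcases hstep with hupc | hdown
      · refine ⟨b, b', by omega, by omega, hb'lt, hxb, ?_⟩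
        rw [show n + 1 + 1 = n + 2 by omega, show n + 2 = (n+1)+1 by omega,
          pow_succ', Equiv.Perm.mul_apply]
        exact hxb'
      · -- going back down: contradiction with hxx
        exfalso
        have hb'a : b' = a := by rw [Fin.ext_iff]; omega
        have : σ ((σ ^ (n + 1)) x) = (σ ^ n) x := by rw [hxb', hb'a, ← hxa]
        rw [← Equiv.Perm.mul_apply, ← pow_succ'] at this
        have : (σ ^ (n + 2)) x = (σ ^ n) x := by
          rw [show n + 2 = n + 1 + 1 by omega, pow_succ', Equiv.Perm.mul_apply]
          rw [pow_succ', Equiv.Perm.mul_apply] at this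
          exact this
        have h2n : (σ ^ n) ((σ ^ 2) x) = (σ ^ n) x := by
          rw [← Equiv.Perm.mul_apply, ← pow_add]
          exact this
        exact hxx (Equiv.injective _ h2n)
  obtain ⟨a, b, ha, hb, hblt, -, -⟩ := claim (F.len i)
  omega

lemma walk (σ : Equiv.Perm F.W)
    (hadj : ∀ v : F.W, v ≠ σ v → ∃ e, F.ends e = s(v, σ v))
    (i : Fin F.numPetals) (m : Fin (F.len i + 1)) (h0 : m ≠ 0) (hl : m ≠ Fin.last (F.len i))
    (x : F.W) (hx : x = F.vtx i m)
    (hu : ∀ n : ℕ, (σ ^ n) x ≠ F.u) (hone : σ x ≠ x) (htwo : σ (σ x) ≠ x) : False := by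
  have hxx : (σ ^ 2) x ≠ x := by
    rw [sq, Equiv.Perm.mul_apply]; exact htwo
  have hsxu : σ x ≠ F.u := by have := hu 1; rwa [pow_one] at this
  obtain ⟨m', hxm', h'0, h'l, hpm⟩ := step F σ hadj i m h0 hl x hx hone hsxu
  rw [fin_ne_zero_iff] at h'0
  rw [fin_ne_last_iff] at h'l
  have h'lt : (m' : ℕ) < F.len i := by have := m'.isLt; omega
  rw [fin_ne_zero_iff] at h0
  rw [fin_ne_last_iff] at hl
  have hlt : (m : ℕ) < F.len i := by have := m.isLt; omega
  rcases hpm with hup | hdown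
  · exact up F σ hadj i x hu hxx m m' hup (by omega) (by omega) hx hxm'
  · -- apply `up` to the inverse permutation starting from σ x
    set τ := σ⁻¹ with hτ
    have hadjτ : ∀ v : F.W, v ≠ τ v → ∃ e, F.ends e = s(v, τ v) := by
      intro v hv
      have : τ v ≠ σ (τ v) := by
        rw [hτ]; simp only [Equiv.Perm.coe_inv, Equiv.apply_symm_apply]; exact fun hh => hv hh.symm
      obtain ⟨e, he⟩ := hadj (τ v) this
      refine ⟨e, ?_⟩
      rw [he, hτ]; simp only [Equiv.Perm.coe_inv, Equiv.apply_symm_apply]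
      exact Sym2.eq_swap
    -- every inverse iterate of σ x is a forward iterate of x
    have hback : ∀ n : ℕ, ∃ k : ℕ, (τ ^ n) (σ x) = (σ ^ k) x := by
      intro n
      induction n with
      | zero => exact ⟨1, by simp [pow_one]⟩
      | succ n ih =>
        obtain ⟨k, hk⟩ := ih
        rcases Nat.eq_zero_or_pos k with hk0 | hkpos
        · subst hk0
          simp only [pow_zero, Equiv.Perm.coe_one, id_eq] at hk
          refine ⟨orderOf σ - 1, ?_⟩
          have hT : 0 < orderOf σ := orderOf_pos σ
          have hTeq : σ ^ orderOf σ = 1 := pow_orderOf_eq_one σ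
          rw [pow_succ', Equiv.Perm.mul_apply, hk, hτ]
          have : σ ((σ ^ (orderOf σ - 1)) x) = x := by
            rw [← Equiv.Perm.mul_apply, ← pow_succ']
            rw [show orderOf σ - 1 + 1 = orderOf σ by omega, hTeq]
            rfl
          exact (Equiv.symm_apply_eq σ).mpr this.symm
        · refine ⟨k - 1, ?_⟩
          rw [pow_succ', Equiv.Perm.mul_apply, hk, hτ]
          have : σ ((σ ^ (k - 1)) x) = (σ ^ k) x := by
            rw [← Equiv.Perm.mul_apply, ← pow_succ', show k - 1 + 1 = k from by omega]
          exact (Equiv.symm_apply_eq σ).mpr this.symm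
    have huτ : ∀ n : ℕ, (τ ^ n) (σ x) ≠ F.u := by
      intro n
      obtain ⟨k, hk⟩ := hback n
      rw [hk]; exact hu k
    have hxxτ : (τ ^ 2) (σ x) ≠ σ x := by
      intro hh
      rw [sq, Equiv.Perm.mul_apply, hτ] at hh
      apply htwo
      have h2 := congrArg σ hh
      simp only [Equiv.Perm.coe_inv, Equiv.apply_symm_apply, Equiv.symm_apply_apply] at h2
      exact h2.symm
    have hτsx : τ (σ x) = x := Equiv.symm_apply_apply σ x
    exact up F τ hadjτ i (σ x) huτ hxxτ m' m hdown (by omega) (by omega) hxm' (by rw [hτsx, hx])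

lemma reach (σ : Equiv.Perm F.W)
    (hadj : ∀ v : F.W, v ≠ σ v → ∃ e, F.ends e = s(v, σ v)) :
    ∀ (n : ℕ) (i : Fin F.numPetals) (m : Fin (F.len i + 1)), m ≠ 0 → m ≠ Fin.last (F.len i) →
    ∀ x : F.W, x = F.vtx i m → 1 ≤ n → (σ ^ n) x = F.u →
    ∃ (j : Fin (F.len i + 1)) (y : F.W), j ≠ 0 ∧ j ≠ Fin.last (F.len i) ∧
      y = F.vtx i j ∧ σ y = F.u := by
  intro n
  induction n with
  | zero => intro i m _ _ x _ h1; omega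
  | succ n ih =>
    intro i m h0 hl x hx h1 hn
    by_cases hσ : σ x = F.u
    · exact ⟨m, x, h0, hl, hx, hσ⟩
    · have hone : σ x ≠ x := by
        intro hh
        rw [pow_fix F σ hh] at hn
        exact hσ (hh.trans hn)
      obtain ⟨m', hxm', h'0, h'l, -⟩ := step F σ hadj i m h0 hl x hx hone hσ
      have hn1 : 1 ≤ n := by
        rcases Nat.eq_zero_or_pos n with h | h
        · subst h; rw [pow_one] at hn; exact absurd hn hσ
        · exact h
      have hn' : (σ ^ n) (σ x) = F.u := by
        rw [← Equiv.Perm.mul_apply, ← pow_succ]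
        exact hn
      exact ih i m' h'0 h'l (σ x) hxm' hn1 hn'

open scoped Pointwise in
lemma prod_support {W : Type} [DecidableEq W]
    (f : W → Polynomial (AddMonoidAlgebra ℝ (Fin d → ℤ))) (s : Finset W) :
    ∀ (k : ℕ) (α : Fin d → ℤ), α ∈ (((∏ v ∈ s, f v).coeff k)).coeff.support →
    ∃ c : W → (Fin d → ℤ), (∀ v ∈ s, ∃ m, c v ∈ ((f v).coeff m).coeff.support) ∧ α = ∑ v ∈ s, c v := by
  classical
  induction s using Finset.induction_on with
  | empty =>
    intro k α h
    rw [Finset.prod_empty] at h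
    refine ⟨fun _ => 0, by simp, ?_⟩
    rw [Polynomial.coeff_one] at h
    split_ifs at h with hk
    · rw [AddMonoidAlgebra.one_def] at h
      have := Finset.mem_singleton.mp (Finsupp.support_single_subset h)
      simpa using this
    · simp at h
  | insert a s' hnotmem ih =>
    intro k α h
    rw [Finset.prod_insert hnotmem, Polynomial.coeff_mul] at h
    have hb := Finsupp.support_finset_sum (by rwa [AddMonoidAlgebra.coeff_sum] at h)
    rcases Finset.mem_biUnion.mp hb with ⟨⟨k1, k2⟩, -, hk⟩
    have hmul := AddMonoidAlgebra.support_coeff_mul_subset _ _ hk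
    rcases Finset.mem_add.mp hmul with ⟨β, hβ, γ, hγ, hsum⟩
    obtain ⟨c, hc, hγsum⟩ := ih k2 γ hγ
    refine ⟨Function.update c a β, ?_, ?_⟩
    · intro v hv
      rcases Finset.mem_insert.mp hv with rfl | hv'
      · exact ⟨k1, by rw [Function.update_self]; exact hβ⟩
      · obtain ⟨m, hm⟩ := hc v hv'
        refine ⟨m, ?_⟩
        rw [Function.update_of_ne (by rintro rfl; exact hnotmem hv') _ _]
        exact hm
    · rw [Finset.sum_insert hnotmem, Function.update_self]
      have : ∑ v ∈ s', Function.update c a β v = ∑ v ∈ s', c v := by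
        apply Finset.sum_congr rfl
        intro v hv
        rw [Function.update_of_ne (by rintro rfl; exact hnotmem hv) _ _]
      rw [this, ← hγsum, ← hsum]

lemma AB_eq (i : Fin F.numPetals) :
    (F.distHead i = F.vtx i (Fin.castSucc (F.dIdx i)) ∨
     F.distTail i = F.vtx i (Fin.castSucc (F.dIdx i))) ∧
    (F.distHead i = F.vtx i (Fin.succ (F.dIdx i)) ∨
     F.distTail i = F.vtx i (Fin.succ (F.dIdx i))) := by
  unfold FlowerGraph.distHead FlowerGraph.distTail
  by_cases h : F.orient i <;> simp [h]

lemma main (σ : Equiv.Perm F.W) (c : F.W → Fin d → ℤ)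
    (hc : ∀ v : F.W, ∃ m, c v ∈ ((Mmat F v (σ v)).coeff m).coeff.support) :
    (∑ v, c v) = 0 ∨
      ∃ i : Fin d, (∑ v, c v) = Pi.single i 1 ∨ (∑ v, c v) = Pi.single i (-1) := by
  classical
  have hE : ∀ v, EC F v (σ v) (c v) := fun v => ec_of_mem_M F (hc v).choose_spec
  have hadj : ∀ v : F.W, v ≠ σ v → ∃ e, F.ends e = s(v, σ v) := fun v hv =>
    adj_of_mem_M F hv (hc v).choose_spec
  set N : Finset F.W := Finset.univ.filter (fun v => c v ≠ 0) with hN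
  set P : Finset F.W := N.filter (fun v => σ (σ v) = v ∧ σ v ≠ v ∧ c (σ v) = - c v) with hP
  have memN : ∀ v, v ∈ N ↔ c v ≠ 0 := by intro v; simp [hN]
  have memP : ∀ v, v ∈ P ↔ (c v ≠ 0 ∧ σ (σ v) = v ∧ σ v ≠ v ∧ c (σ v) = - c v) := by
    intro v; simp [hP, hN, and_assoc]
  have hsumP : ∑ v ∈ P, c v = 0 := by
    apply Finset.sum_involution (fun v _ => σ v)
    · intro a ha
      obtain ⟨-, -, -, h4⟩ := (memP a).mp ha
      rw [h4, add_neg_cancel]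
    · intro a ha _
      exact ((memP a).mp ha).2.2.1
    · intro a ha
      obtain ⟨h1, h2, h3, h4⟩ := (memP a).mp ha
      refine (memP (σ a)).mpr ⟨by rw [h4]; exact neg_ne_zero.mpr h1, ?_, ?_, ?_⟩
      · exact congrArg σ h2
      · rw [h2]; exact fun hh => h3 hh.symm
      · rw [h2, h4, neg_neg]
    · intro a ha
      exact ((memP a).mp ha).2.1
  have hsource : ∀ v ∈ N \ P,
      (v = F.u ∧ σ v = v) ∨
      (∃ i, 2 ≤ F.len i ∧
        ((c v = Pi.single (F.ann i) 1 ∧ v = F.distHead i ∧ σ v = F.distTail i) ∨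
         (c v = Pi.single (F.ann i) (-1) ∧ v = F.distTail i ∧ σ v = F.distHead i)) ∧
        ∃ (j : Fin (F.len i + 1)) (y : F.W), j ≠ 0 ∧ j ≠ Fin.last (F.len i) ∧
          y = F.vtx i j ∧ σ y = F.u) := by
    intro v hv
    have hvN : c v ≠ 0 := (memN v).mp (Finset.mem_sdiff.mp hv).1
    have hvnP : v ∉ P := (Finset.mem_sdiff.mp hv).2
    rcases hE v with h0 | ⟨hu1, hu2, -⟩ | ⟨i, h2i, hbr⟩
    · exact absurd h0 hvN
    · exact Or.inl ⟨hu1, by rw [hu2, hu1]⟩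
    right
    have hvσ : σ v ≠ v := by
      rcases hbr with ⟨-, hva, hvb⟩ | ⟨-, hva, hvb⟩
      · rw [hvb, hva]; exact (ht_ne F h2i).symm
      · rw [hvb, hva]; exact ht_ne F h2i
    have hvht : v = F.distHead i ∨ v = F.distTail i := by
      rcases hbr with ⟨-, hva, -⟩ | ⟨-, hva, -⟩
      exacts [Or.inl hva, Or.inr hva]
    have hσvht : σ v = F.distHead i ∨ σ v = F.distTail i := by
      rcases hbr with ⟨-, -, hvb⟩ | ⟨-, -, hvb⟩
      exacts [Or.inr hvb, Or.inl hvb]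
    have hexu : ∃ n : ℕ, (σ ^ n) v = F.u := by
      by_contra hcon
      push_neg at hcon
      have hvu : v ≠ F.u := by have := hcon 0; simpa using this
      have hσvu : σ v ≠ F.u := by have := hcon 1; simpa using this
      have hheadu : F.distHead i ≠ F.u := by
        rcases hbr with ⟨-, hva, -⟩ | ⟨-, -, hvb⟩
        · exact hva ▸ hvu
        · exact hvb ▸ hσvu
      have htailu : F.distTail i ≠ F.u := by
        rcases hbr with ⟨-, -, hvb⟩ | ⟨-, hva, -⟩
        · exact hvb ▸ hσvu
        · exact hva ▸ hvu
      have hAu : F.vtx i (Fin.castSucc (F.dIdx i)) ≠ F.u := by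
        rcases (AB_eq F i).1 with hh | hh
        · exact hh ▸ hheadu
        · exact hh ▸ htailu
      have hBu : F.vtx i (Fin.succ (F.dIdx i)) ≠ F.u := by
        rcases (AB_eq F i).2 with hh | hh
        · exact hh ▸ hheadu
        · exact hh ▸ htailu
      obtain ⟨mv, hm0, hml, hmv⟩ := mem_ht_interior F v hvht hvu
      have hσσ : σ (σ v) = v := by
        by_contra hσσ
        exact walk F σ hadj i mv hm0 hml v hmv hcon hvσ hσσ
      obtain ⟨m', hm'⟩ := hc (σ v)
      have hvv : s(σ v, σ (σ v))
          = s(F.vtx i (Fin.castSucc (F.dIdx i)), F.vtx i (Fin.succ (F.dIdx i))) := by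
        rw [hσσ, ← ht_sym2 F i]
        rcases hbr with ⟨-, hva, hvb⟩ | ⟨-, hva, hvb⟩
        · rw [hvb, hva, Sym2.eq_swap]
        · rw [hvb, hva]
      have hsh := sharp F h2i hAu hBu hvv hm'
      apply hvnP
      rcases hbr with ⟨hc1, hva, hvb⟩ | ⟨hc1, hva, hvb⟩
      · rcases hsh with ⟨hs1, -, -⟩ | ⟨-, -, hs3⟩
        · exact absurd (hvb.symm.trans hs1).symm (ht_ne F h2i)
        · refine (memP v).mpr ⟨hvN, hσσ, hvσ, ?_⟩
          rw [hs3, hc1, sneg]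
      · rcases hsh with ⟨-, -, hs3⟩ | ⟨hs1, -, -⟩
        · refine (memP v).mpr ⟨hvN, hσσ, hvσ, ?_⟩
          rw [hs3, hc1, sneg, neg_neg]
        · exact absurd (hvb.symm.trans hs1) (ht_ne F h2i)
    obtain ⟨n, hn⟩ := hexu
    by_cases hvu : v = F.u
    · have hσvu : σ v ≠ F.u := fun hh => hvσ (hh.trans hvu.symm)
      obtain ⟨mx, h0x, hlx, hmx⟩ := mem_ht_interior F (σ v) hσvht hσvu
      have hT1 : 1 ≤ orderOf σ := orderOf_pos σ
      have hT : 2 ≤ orderOf σ := by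
        rcases Nat.lt_or_ge (orderOf σ) 2 with hh | hh
        · exfalso
          have : orderOf σ = 1 := by omega
          have := orderOf_eq_one_iff.mp this
          exact hvσ (by rw [this]; rfl)
        · exact hh
      have hm : (σ ^ (orderOf σ - 1)) (σ v) = F.u := by
        rw [← Equiv.Perm.mul_apply, ← pow_succ,
          show orderOf σ - 1 + 1 = orderOf σ from by omega, pow_orderOf_eq_one σ]
        exact hvu
      exact ⟨i, h2i, hbr,
        reach F σ hadj (orderOf σ - 1) i mx h0x hlx (σ v) hmx (by omega) hm⟩
    · obtain ⟨mx, h0x, hlx, hmx⟩ := mem_ht_interior F v hvht hvu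
      have hn1 : 1 ≤ n := by
        rcases Nat.eq_zero_or_pos n with hh | hh
        · exfalso; apply hvu; rw [← hn, hh, pow_zero]; rfl
        · exact hh
      exact ⟨i, h2i, hbr, reach F σ hadj n i mx h0x hlx v hmx hn1 hn⟩
  have huniq : ∀ v ∈ N \ P, ∀ w ∈ N \ P, v = w := by
    intro v hv w hw
    by_contra hvw
    rcases hsource v hv with ⟨hv1, hv2⟩ | ⟨i, h2i, hbr, j, y, hj0, hjl, hy, hyu⟩
    · rcases hsource w hw with ⟨hw1, hw2⟩ | ⟨i', h2i', hbr', j', y', hj0', hjl', hy', hyu'⟩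
      · exact hvw (hv1.trans hw1.symm)
      · have hfix : σ F.u = F.u := by rw [← hv1]; rw [hv2, hv1]
        have : y' = F.u := σ.injective (hyu'.trans hfix.symm)
        exact F.interior_ne_u i' j' hj0' hjl' (hy' ▸ this)
    · rcases hsource w hw with ⟨hw1, hw2⟩ | ⟨i', h2i', hbr', j', y', hj0', hjl', hy', hyu'⟩
      · have hfix : σ F.u = F.u := by rw [← hw1]; rw [hw2, hw1]
        have : y = F.u := σ.injective (hyu.trans hfix.symm)
        exact F.interior_ne_u i j hj0 hjl (hy ▸ this)
      · by_cases hii : i = i'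
        · subst hii
          rcases hbr with ⟨hc1, hh1, hh2⟩ | ⟨hc1, hh1, hh2⟩ <;>
            rcases hbr' with ⟨hc1', hh1', hh2'⟩ | ⟨hc1', hh1', hh2'⟩
          · exact hvw (hh1.trans hh1'.symm)
          · -- v = head, w = tail : v is paired, contradiction
            apply (Finset.mem_sdiff.mp hv).2
            have hσvw : σ v = w := hh2.trans hh1'.symm
            refine (memP v).mpr ⟨(memN v).mp (Finset.mem_sdiff.mp hv).1, ?_, ?_, ?_⟩
            · rw [hσvw, hh2', hh1]
            · rw [hh2, hh1]; exact (ht_ne F h2i).symm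
            · rw [hσvw, hc1', hc1, sneg]
          · -- v = tail, w = head : w is paired, contradiction
            apply (Finset.mem_sdiff.mp hw).2
            have hσwv : σ w = v := hh2'.trans hh1.symm
            refine (memP w).mpr ⟨(memN w).mp (Finset.mem_sdiff.mp hw).1, ?_, ?_, ?_⟩
            · rw [hσwv, hh2, hh1']
            · rw [hh2', hh1']; exact (ht_ne F h2i).symm
            · rw [hσwv, hc1, hc1', sneg]
          · exact hvw (hh1.trans hh1'.symm)
        · have hyy : y = y' := σ.injective (hyu.trans hyu'.symm)
          exact F.interior_disjoint i i' j j' hii hj0 hjl hj0' hjl'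
            (by rw [← hy, ← hy', hyy])
  have htot : (∑ v, c v) = ∑ v ∈ N, c v := (Finset.sum_filter_ne_zero Finset.univ).symm
  have hsplit : ∑ v ∈ N, c v = (∑ v ∈ N \ P, c v) + ∑ v ∈ P, c v :=
    (Finset.sum_sdiff (Finset.filter_subset _ _)).symm
  rcases Finset.eq_empty_or_nonempty (N \ P) with hNP | ⟨v, hv⟩
  · left; rw [htot, hsplit, hNP, Finset.sum_empty, hsumP, add_zero]
  · have hNPsing : N \ P = {v} :=
      Finset.eq_singleton_iff_unique_mem.mpr ⟨hv, fun w hw => huniq w hw v hv⟩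
    have hsum1 : ∑ v' ∈ N \ P, c v' = c v := by rw [hNPsing, Finset.sum_singleton]
    have hvN : c v ≠ 0 := (memN v).mp (Finset.mem_sdiff.mp hv).1
    have hval : ∃ i : Fin d, c v = Pi.single i 1 ∨ c v = Pi.single i (-1) := by
      rcases hE v with h0 | ⟨-, -, i, hα⟩ | ⟨i, -, hbr⟩
      · exact absurd h0 hvN
      · exact ⟨F.ann i, hα⟩
      · rcases hbr with ⟨h, -, -⟩ | ⟨h, -, -⟩
        exacts [⟨F.ann i, Or.inl h⟩, ⟨F.ann i, Or.inr h⟩]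
    obtain ⟨i, hi⟩ := hval
    right
    exact ⟨i, by rw [htot, hsplit, hsum1, hsumP, add_zero]; exact hi⟩

end FlowerGraphAux

/-- Periodic flower graphs are minimally sparse: every monomial `z^α` appearing with a
nonzero coefficient in `det(H(z) − λ·Id)` — viewed as a polynomial in `λ` with coefficients
in `ℝ[z₁^{±1},…,z_d^{±1}]` — has `α = 0`, `α = e_i`, or `α = −e_i` for some `i`. -/
theorem stmt_5 (d : ℕ) (hd : 1 ≤ d) (F : FlowerGraph d) :
    ∀ (k : ℕ) (α : Fin d → ℤ),
      (((F.floquet.map Polynomial.C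
          - (Polynomial.X : Polynomial (AddMonoidAlgebra ℝ (Fin d → ℤ))) • 1).det).coeff k).coeff α ≠ 0 →
      α = 0 ∨ ∃ i : Fin d, α = Pi.single i 1 ∨ α = Pi.single i (-1) := by
  classical
  intro k α hα
  rw [← Finsupp.mem_support_iff] at hα
  rw [Matrix.det_apply, Polynomial.finset_sum_coeff] at hα
  rcases Finset.mem_biUnion.mp (Finsupp.support_finset_sum (by rwa [AddMonoidAlgebra.coeff_sum] at hα)) with ⟨σ, -, hσ⟩
  rw [Polynomial.coeff_smul] at hσ
  have h2 := Finsupp.support_smul hσ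
  obtain ⟨c, hc, hsum⟩ := FlowerGraphAux.prod_support
    (fun v => (F.floquet.map Polynomial.C
      - (Polynomial.X : Polynomial (AddMonoidAlgebra ℝ (Fin d → ℤ))) • 1) (σ v) v)
    Finset.univ k α h2
  have hc'' : ∀ w : F.W, ∃ m,
      (fun w => c (σ⁻¹ w)) w ∈ ((FlowerGraphAux.Mmat F w (σ⁻¹ w)).coeff m).coeff.support := by
    intro w
    obtain ⟨m, hm⟩ := hc (σ⁻¹ w) (Finset.mem_univ _)
    refine ⟨m, ?_⟩
    have hww : σ (σ⁻¹ w) = w := Equiv.apply_symm_apply σ w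
    rw [hww] at hm
    exact hm
  have hres := FlowerGraphAux.main F σ⁻¹ (fun w => c (σ⁻¹ w)) hc''
  have hsum' : (∑ w, c (σ⁻¹ w)) = ∑ v, c v := Equiv.sum_comp σ⁻¹ c
  rw [hsum'] at hres
  rw [hsum]
  exact hres
end

section
/- Let F be a labeled annotated flower graph with all edge labels E(e) = 1 (the Schrödinger case), and suppose petal P₁ is a 2-cycle: it consists of two parallel edges between u and an interior vertex w, one of which is the distinguished edge, oriented u → w, with f(1) = j. Let H′(z) be the matrix obtained from the Floquet matrix H(z) by substituting z_j = −1. Then every off-diagonal entry of H′(z) in row w and in column w is zero, and det(H′(z) − λ·Id) = (V(w) − λ) · det(H″(z) − λ·Id), where H″(z) is obtained from H′(z) by deleting row and column w. In particular det(H′(z) − V(w)·Id) = 0 identically in the remaining variables z (the coordinate projection z_j = −1 has a flat band at λ = V(w)). -/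
/-- Evaluation of a real Laurent polynomial in `z₁,…,z_d` at a point `z ∈ ℂ^d`. -/
noncomputable def lEval (d : ℕ) (z : Fin d → ℂ) (p : AddMonoidAlgebra ℝ (Fin d → ℤ)) : ℂ :=
  p.coeff.sum fun α c => (c : ℂ) * ∏ i, z i ^ (α i)

/-- The Floquet matrix evaluated at a point `z ∈ ℂ^d`. -/
noncomputable def FlowerGraph.floquetEval {d : ℕ} (F : FlowerGraph d) (z : Fin d → ℂ) :
    Matrix F.W F.W ℂ :=
  F.floquet.map (lEval d z)

/-- Schrödinger case (all edge labels 1): if petal `P₁` is a 2-cycle between `u` and `w`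
with distinguished edge oriented `u → w` and `f(1) = j`, then after substituting `z_j = −1`
all off-diagonal entries of the Floquet matrix in row `w` and column `w` vanish,
`det(H′(z) − λ·Id) = (V(w) − λ)·det(H″(z) − λ·Id)` where `H″` deletes row and column `w`,
and `det(H′(z) − V(w)·Id) = 0` identically (a flat band at `λ = V(w)`). -/
theorem stmt_6 (d : ℕ) (hd : 1 ≤ d) (F : FlowerGraph d)
    (hSchrodinger : ∀ e, F.E e = 1)
    (i₀ : Fin F.numPetals) (hlen : F.len i₀ = 2)
    (w : F.W) (hw : w = F.vtx i₀ ⟨1, by have := F.len_pos i₀; omega⟩)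
    (hhead : F.distHead i₀ = F.u) (htail : F.distTail i₀ = w) :
    ∀ z : Fin d → ℂ, (∀ i, z i ≠ 0) →
      -- all off-diagonal entries of H′(z) in row w and column w vanish
      (∀ v : F.W, v ≠ w →
        F.floquetEval (Function.update z (F.ann i₀) (-1)) v w = 0 ∧
        F.floquetEval (Function.update z (F.ann i₀) (-1)) w v = 0) ∧
      -- det(H′(z) − λ·Id) = (V(w) − λ)·det(H″(z) − λ·Id)
      (∀ lam : ℂ,
        (F.floquetEval (Function.update z (F.ann i₀) (-1)) - lam • 1).det
          = ((F.V w : ℂ) - lam) *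
            ((F.floquetEval (Function.update z (F.ann i₀) (-1))).submatrix
                (fun v : {v : F.W // v ≠ w} => (v : F.W))
                (fun v : {v : F.W // v ≠ w} => (v : F.W)) - lam • 1).det) ∧
      -- flat band at λ = V(w)
      (F.floquetEval (Function.update z (F.ann i₀) (-1)) - (F.V w : ℂ) • 1).det = 0 := by
  classical
  intro z _hz
  set z' : Fin d → ℂ := Function.update z (F.ann i₀) (-1) with hz'def
  have hz'j : z' (F.ann i₀) = -1 := Function.update_self _ _ _
  -- evaluation lemmas
  have lEval_single : ∀ (α : Fin d → ℤ) (c : ℝ),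
      lEval d z' (AddMonoidAlgebra.single α c) = (c : ℂ) * ∏ i, z' i ^ (α i) := by
    intro α c
    exact Finsupp.sum_single_index (by simp)
  have lEval_zero : lEval d z' 0 = 0 := by simp [lEval]
  have lEval_add : ∀ p q : AddMonoidAlgebra ℝ (Fin d → ℤ),
      lEval d z' (p + q) = lEval d z' p + lEval d z' q := by
    intro p q
    exact Finsupp.sum_add_index' (by simp) (by intro a b₁ b₂; push_cast; ring)
  have ev_const : ∀ c : ℝ, lEval d z' (AddMonoidAlgebra.single (0 : Fin d → ℤ) c) = (c : ℂ) := by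
    intro c; rw [lEval_single]; simp
  have ev_pos : lEval d z' (AddMonoidAlgebra.single (Pi.single (F.ann i₀) (1 : ℤ)) 1) = -1 := by
    rw [lEval_single, Fintype.prod_eq_single (F.ann i₀)
      (fun x hx => by rw [Pi.single_eq_of_ne hx, zpow_zero])]
    rw [Pi.single_eq_same, hz'j]
    norm_num
  have ev_neg : lEval d z' (AddMonoidAlgebra.single (Pi.single (F.ann i₀) (-1 : ℤ)) 1) = -1 := by
    rw [lEval_single, Fintype.prod_eq_single (F.ann i₀)
      (fun x hx => by rw [Pi.single_eq_of_ne hx, zpow_zero])]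
    rw [Pi.single_eq_same, hz'j]
    norm_num
  -- basic graph facts
  have hlp := F.len_pos i₀
  have vtxeq : ∀ a b : Fin (F.len i₀ + 1), a.val = b.val → F.vtx i₀ a = F.vtx i₀ b :=
    fun a b h => congrArg (F.vtx i₀) (Fin.ext h)
  have hv0 : ∀ h, F.vtx i₀ ⟨0, h⟩ = F.u := fun h => by
    rw [vtxeq ⟨0, h⟩ 0 (by simp), F.vtx_zero]
  have hv1 : ∀ h, F.vtx i₀ ⟨1, h⟩ = w := fun h => hw.symm
  have hv2 : ∀ h, F.vtx i₀ ⟨2, h⟩ = F.u := fun h => by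
    rw [vtxeq ⟨2, h⟩ (Fin.last (F.len i₀)) (by simp [hlen]), F.vtx_last]
  have h1ne0 : (⟨1, by omega⟩ : Fin (F.len i₀ + 1)) ≠ 0 := by
    simp [Fin.ext_iff]
  have h1nelast : (⟨1, by omega⟩ : Fin (F.len i₀ + 1)) ≠ Fin.last (F.len i₀) := by
    simp [Fin.ext_iff, hlen]
  have hwu : w ≠ F.u := by
    rw [hw]; exact F.interior_ne_u i₀ ⟨1, by omega⟩ h1ne0 h1nelast
  -- the two petal edges
  set e0 : F.K := F.petalEdge i₀ ⟨0, by omega⟩ with he0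
  set e1 : F.K := F.petalEdge i₀ ⟨1, by omega⟩ with he1
  set ed : F.K := F.petalEdge i₀ (F.dIdx i₀) with hed
  have hE0 : F.ends e0 = s(F.u, w) := by
    rw [he0, F.petalEdge_ends,
        show F.vtx i₀ (Fin.castSucc ⟨0, by omega⟩) = F.u from hv0 _,
        show F.vtx i₀ (Fin.succ ⟨0, by omega⟩) = w from hv1 _]
  have hE1 : F.ends e1 = s(F.u, w) := by
    rw [he1, F.petalEdge_ends,
        show F.vtx i₀ (Fin.castSucc ⟨1, by omega⟩) = w from hv1 _,
        show F.vtx i₀ (Fin.succ ⟨1, by omega⟩) = F.u from hv2 _]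
    exact Sym2.eq_swap
  have hinj : ∀ (i' : Fin F.numPetals) (j' : Fin (F.len i')) (j : Fin (F.len i₀)),
      F.petalEdge i' j' = F.petalEdge i₀ j →
        (⟨i', j'⟩ : Σ i, Fin (F.len i)) = ⟨i₀, j⟩ :=
    fun _ _ _ h => F.petalEdge_inj h
  have hne01 : e0 ≠ e1 := by
    intro h
    rw [he0, he1] at h
    have h2 := eq_of_heq (Sigma.mk.inj_iff.mp (hinj _ _ _ h)).2
    simp [Fin.ext_iff] at h2
  have hdcase : ed = e0 ∨ ed = e1 := by
    have h01 : (F.dIdx i₀).val = 0 ∨ (F.dIdx i₀).val = 1 := by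
      have := (F.dIdx i₀).isLt; omega
    rcases h01 with h | h
    · exact Or.inl (hed.trans ((congrArg (F.petalEdge i₀) (Fin.ext h)).trans he0.symm))
    · exact Or.inr (hed.trans ((congrArg (F.petalEdge i₀) (Fin.ext h)).trans he1.symm))
  have hEd : F.ends ed = s(F.u, w) := by
    rcases hdcase with h | h
    · rw [h]; exact hE0
    · rw [h]; exact hE1
  have hcover01 : ∀ e : F.K, w ∈ F.ends e → e = e0 ∨ e = e1 := by
    intro e he
    obtain ⟨j', hj'⟩ := F.interior_incident e i₀ ⟨1, by omega⟩ h1ne0 h1nelast (hw ▸ he)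
    have : j'.val = 0 ∨ j'.val = 1 := by have := j'.isLt; omega
    rcases this with h | h
    · exact Or.inl (hj'.trans ((congrArg (F.petalEdge i₀) (Fin.ext h)).trans he0.symm))
    · exact Or.inr (hj'.trans ((congrArg (F.petalEdge i₀) (Fin.ext h)).trans he1.symm))
  obtain ⟨eo, hedo, hEo, hcover, hno⟩ :
      ∃ eo : F.K, ed ≠ eo ∧ F.ends eo = s(F.u, w) ∧
        (∀ e : F.K, w ∈ F.ends e → e = ed ∨ e = eo) ∧
        ¬ ∃ i, eo = F.petalEdge i (F.dIdx i) := by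
    rcases hdcase with h | h
    · refine ⟨e1, h ▸ hne01, hE1, ?_, ?_⟩
      · intro e he
        rcases hcover01 e he with h' | h'
        · exact Or.inl (h'.trans h.symm)
        · exact Or.inr h'
      · rintro ⟨i, hi⟩
        rw [he1] at hi
        obtain ⟨hi0, hheq⟩ := Sigma.mk.inj_iff.mp (hinj _ _ _ hi.symm)
        have hd1 : F.dIdx i₀ = ⟨1, by omega⟩ := by subst hi0; exact eq_of_heq hheq
        exact hne01 (h.symm.trans (hed.trans
          ((congrArg (F.petalEdge i₀) hd1).trans he1.symm)))
    · refine ⟨e0, h ▸ hne01.symm, hE0, ?_, ?_⟩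
      · intro e he
        rcases hcover01 e he with h' | h'
        · exact Or.inr h'
        · exact Or.inl (h'.trans h.symm)
      · rintro ⟨i, hi⟩
        rw [he0] at hi
        obtain ⟨hi0, hheq⟩ := Sigma.mk.inj_iff.mp (hinj _ _ _ hi.symm)
        have hd0 : F.dIdx i₀ = ⟨0, by omega⟩ := by subst hi0; exact eq_of_heq hheq
        exact hne01 ((hed.trans
          ((congrArg (F.petalEdge i₀) hd0).trans he0.symm)).symm.trans h)
  have choose_eq : ∀ hpe : ∃ i, ed = F.petalEdge i (F.dIdx i), hpe.choose = i₀ := by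
    intro hpe
    have hs := hinj hpe.choose (F.dIdx hpe.choose) (F.dIdx i₀)
      (hpe.choose_spec.symm.trans hed)
    exact (Sigma.mk.inj_iff.mp hs).1
  -- edge term computations
  have hterm_ed_uw : F.edgeTerm F.u w ed
      = AddMonoidAlgebra.single (Pi.single (F.ann i₀) (1 : ℤ)) 1 := by
    have hpe : ∃ i, ed = F.petalEdge i (F.dIdx i) := ⟨i₀, hed⟩
    simp only [FlowerGraph.edgeTerm]
    rw [if_pos hEd, dif_pos hpe, choose_eq hpe,
        if_neg (show ¬ F.len i₀ = 1 by omega),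
        if_pos ⟨hhead.symm, htail.symm⟩, hSchrodinger]
  have hterm_ed_wu : F.edgeTerm w F.u ed
      = AddMonoidAlgebra.single (Pi.single (F.ann i₀) (-1 : ℤ)) 1 := by
    have hpe : ∃ i, ed = F.petalEdge i (F.dIdx i) := ⟨i₀, hed⟩
    simp only [FlowerGraph.edgeTerm]
    rw [if_pos (hEd.trans Sym2.eq_swap), dif_pos hpe, choose_eq hpe,
        if_neg (show ¬ F.len i₀ = 1 by omega),
        if_neg (fun h => hwu (h.1.trans hhead)),
        if_pos ⟨hhead.symm, htail.symm⟩, hSchrodinger]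
  have hterm_eo : ∀ v v' : F.W, F.ends eo = s(v, v') →
      F.edgeTerm v v' eo = AddMonoidAlgebra.single (0 : Fin d → ℤ) 1 := by
    intro v v' h
    simp only [FlowerGraph.edgeTerm]
    rw [if_pos h, dif_neg hno, hSchrodinger]
  have hterm_zero : ∀ (v v' : F.W) (e : F.K), F.ends e ≠ s(v, v') →
      F.edgeTerm v v' e = 0 := by
    intro v v' e h
    simp only [FlowerGraph.edgeTerm]
    rw [if_neg h]
  -- sums over edges
  have hsum_uw : ∑ e : F.K, F.edgeTerm F.u w e
      = AddMonoidAlgebra.single (Pi.single (F.ann i₀) (1 : ℤ)) 1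
        + AddMonoidAlgebra.single (0 : Fin d → ℤ) 1 := by
    rw [Finset.sum_eq_add ed eo hedo
      (fun c _ hc => hterm_zero _ _ c (fun hce => by
        rcases hcover c (by rw [hce]; exact Sym2.mem_mk_right F.u w) with h | h
        · exact hc.1 h
        · exact hc.2 h))
      (fun h => absurd (Finset.mem_univ ed) h)
      (fun h => absurd (Finset.mem_univ eo) h),
      hterm_ed_uw, hterm_eo _ _ hEo]
  have hsum_wu : ∑ e : F.K, F.edgeTerm w F.u e
      = AddMonoidAlgebra.single (Pi.single (F.ann i₀) (-1 : ℤ)) 1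
        + AddMonoidAlgebra.single (0 : Fin d → ℤ) 1 := by
    rw [Finset.sum_eq_add ed eo hedo
      (fun c _ hc => hterm_zero _ _ c (fun hce => by
        rcases hcover c (by rw [hce]; exact Sym2.mem_mk_left w F.u) with h | h
        · exact hc.1 h
        · exact hc.2 h))
      (fun h => absurd (Finset.mem_univ ed) h)
      (fun h => absurd (Finset.mem_univ eo) h),
      hterm_ed_wu, hterm_eo _ _ (hEo.trans Sym2.eq_swap)]
  have hsum_vw : ∀ v : F.W, v ≠ w → v ≠ F.u →
      ∑ e : F.K, F.edgeTerm v w e = 0 := by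
    intro v hvw hvu
    refine Finset.sum_eq_zero fun e _ => hterm_zero _ _ e fun hce => ?_
    have hmem : w ∈ F.ends e := by rw [hce]; exact Sym2.mem_mk_right v w
    have hend : F.ends e = s(F.u, w) := by
      rcases hcover e hmem with h | h
      · rw [h]; exact hEd
      · rw [h]; exact hEo
    rcases Sym2.eq_iff.mp (hce.symm.trans hend) with ⟨h1, _⟩ | ⟨h1, _⟩
    · exact hvu h1
    · exact hvw h1
  have hsum_wv : ∀ v : F.W, v ≠ w → v ≠ F.u →
      ∑ e : F.K, F.edgeTerm w v e = 0 := by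
    intro v hvw hvu
    refine Finset.sum_eq_zero fun e _ => hterm_zero _ _ e fun hce => ?_
    have hmem : w ∈ F.ends e := by rw [hce]; exact Sym2.mem_mk_left w v
    have hend : F.ends e = s(F.u, w) := by
      rcases hcover e hmem with h | h
      · rw [h]; exact hEd
      · rw [h]; exact hEo
    rcases Sym2.eq_iff.mp (hce.symm.trans hend) with ⟨h1, h2⟩ | ⟨_, h2⟩
    · exact hvw h2
    · exact hvu h2
  have hsum_ww : ∑ e : F.K, F.edgeTerm w w e = 0 := by
    refine Finset.sum_eq_zero fun e _ => hterm_zero _ _ e fun hce => ?_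
    have hdiag : (F.ends e).IsDiag := by
      rw [hce]; exact Sym2.mk_isDiag_iff.mpr rfl
    have hloop : F.ends e = Sym2.diag F.u := F.loops_only_at_u e hdiag
    have : s(w, w) = s(F.u, F.u) := hce.symm.trans hloop
    rcases Sym2.eq_iff.mp this with ⟨h1, _⟩ | ⟨h1, _⟩ <;> exact hwu h1
  -- floquet matrix entries
  have hfl : ∀ v v' : F.W, F.floquet v v'
      = (if v = v' then AddMonoidAlgebra.single 0 (F.V v) else 0)
        + ∑ e : F.K, F.edgeTerm v v' e := fun _ _ => rfl
  have hme : ∀ v v' : F.W, F.floquetEval z' v v' = lEval d z' (F.floquet v v') :=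
    fun _ _ => rfl
  have hww : F.floquetEval z' w w = (F.V w : ℂ) := by
    rw [hme, hfl, if_pos rfl, hsum_ww, add_zero, ev_const]
  have hOff : ∀ v : F.W, v ≠ w →
      F.floquetEval z' v w = 0 ∧ F.floquetEval z' w v = 0 := by
    intro v hv
    by_cases hvu : v = F.u
    · subst hvu
      constructor
      · rw [hme, hfl, if_neg hv, zero_add, hsum_uw, lEval_add, ev_pos, ev_const]
        norm_num
      · rw [hme, hfl, if_neg (Ne.symm hv), zero_add, hsum_wu, lEval_add, ev_neg, ev_const]
        norm_num
    · constructor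
      · rw [hme, hfl, if_neg hv, zero_add, hsum_vw v hv hvu, lEval_zero]
      · rw [hme, hfl, if_neg (Ne.symm hv), zero_add, hsum_wv v hv hvu, lEval_zero]
  -- determinant factorization
  have hdet : ∀ lam : ℂ,
      (F.floquetEval z' - lam • 1).det
        = ((F.V w : ℂ) - lam) *
          ((F.floquetEval z').submatrix
              (fun v : {v : F.W // v ≠ w} => (v : F.W))
              (fun v : {v : F.W // v ≠ w} => (v : F.W)) - lam • 1).det := by
    intro lam
    set M : Matrix F.W F.W ℂ := F.floquetEval z' - lam • 1 with hMdef
    have hM_vw : ∀ v : F.W, v ≠ w → M v w = 0 := by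
      intro v hv
      rw [hMdef]
      simp [Matrix.sub_apply, Matrix.one_apply_ne hv, (hOff v hv).1]
    have hM_ww : M w w = (F.V w : ℂ) - lam := by
      rw [hMdef]
      simp [Matrix.sub_apply, Matrix.one_apply_eq, hww]
    have hsub : (F.floquetEval z').submatrix
          (fun v : {v : F.W // v ≠ w} => (v : F.W))
          (fun v : {v : F.W // v ≠ w} => (v : F.W)) - lam • 1
        = M.submatrix (fun v : {v : F.W // v ≠ w} => (v : F.W))
            (fun v : {v : F.W // v ≠ w} => (v : F.W)) := by
      ext a b
      rw [hMdef]
      simp [Matrix.submatrix_apply, Matrix.sub_apply, Matrix.one_apply, Subtype.ext_iff]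
    rw [hsub]
    have h21 : (M.submatrix (⇑(Equiv.sumCompl (fun v : F.W => v = w)))
        (⇑(Equiv.sumCompl (fun v : F.W => v = w)))).toBlocks₂₁ = 0 := by
      ext a b
      simp only [Matrix.toBlocks₂₁, Matrix.submatrix_apply, Matrix.of_apply,
        Matrix.zero_apply, Equiv.sumCompl_apply_inl, Equiv.sumCompl_apply_inr]
      rw [b.prop]
      exact hM_vw a.val a.prop
    have h22 : (M.submatrix (⇑(Equiv.sumCompl (fun v : F.W => v = w)))
          (⇑(Equiv.sumCompl (fun v : F.W => v = w)))).toBlocks₂₂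
        = M.submatrix (fun v : {v : F.W // v ≠ w} => (v : F.W))
            (fun v : {v : F.W // v ≠ w} => (v : F.W)) := by
      ext a b
      simp [Matrix.toBlocks₂₂, Matrix.submatrix_apply]
    rw [← Matrix.det_submatrix_equiv_self (Equiv.sumCompl (fun v : F.W => v = w)) M,
        ← Matrix.fromBlocks_toBlocks (M.submatrix _ _), h21,
        Matrix.det_fromBlocks_zero₂₁, h22]
    congr 1
    haveI : Unique {v : F.W // v = w} := ⟨⟨⟨w, rfl⟩⟩, fun a => Subtype.ext a.prop⟩
    rw [Matrix.det_unique]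
    show M ((Equiv.sumCompl (fun v : F.W => v = w)) (Sum.inl default))
        ((Equiv.sumCompl (fun v : F.W => v = w)) (Sum.inl default)) = _
    rw [Equiv.sumCompl_apply_inl, (default : {v : F.W // v = w}).prop]
    exact hM_ww
  refine ⟨hOff, hdet, ?_⟩
  rw [hdet (F.V w)]
  simp
end

section
/- Let F be a labeled annotated flower graph with all edge labels E(e) = 1 (the Schrödinger case), whose stem graph is connected and contains u, and whose annotation f : {1,…,ℓ} → {1,…,d} is surjective. If no petal of F is a 2-cycle (no non-loop petal has length k = 2), then for every subset I ⊆ {1,…,d} and every choice of signs ε_j ∈ {−1,1} for j ∉ I, the coordinate projection graph Γ′ is connected. -/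
/-- Substitution of `z_j = ε_j` for all `j ∉ I` into a Laurent polynomial in `z₁,…,z_d`
(the result only involves the variables `z_i` for `i ∈ I`). -/
noncomputable def substCoef (d : ℕ) (I : Finset (Fin d)) (ε : Fin d → ℝ)
    (p : AddMonoidAlgebra ℝ (Fin d → ℤ)) : AddMonoidAlgebra ℝ (Fin d → ℤ) := by
  classical
  exact p.coeff.sum fun α c =>
    AddMonoidAlgebra.single (fun i => if i ∈ I then α i else 0) (c * ∏ j ∈ Iᶜ, ε j ^ (α j))

namespace FlowerGraph

variable {d : ℕ} (F : FlowerGraph d)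

/-- A vertex of `W` is interior if it is an interior vertex of some petal. -/
def IsInteriorVtx (v : F.W) : Prop :=
  ∃ i j, j ≠ 0 ∧ j ≠ Fin.last (F.len i) ∧ F.vtx i j = v

/-- Adjacency along stem edges (edges lying in no petal). -/
def stemAdj (v v' : F.W) : Prop :=
  ∃ e : F.K, (∀ i j, e ≠ F.petalEdge i j) ∧ F.ends e = s(v, v')

/-- Adjacency in the coordinate projection graph `Γ′` with vertex set `ℤ^I × W`: there is an
edge between `(β, v)` and `(β + γ, v′)` whenever the monomial `z^γ` appears with a nonzero
coefficient in the entry `H′(z)_{v,v′}` and `(v, γ) ≠ (v′, 0)`. -/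
def projAdj (I : Finset (Fin d)) (ε : Fin d → ℝ)
    (p q : ({ j : Fin d // j ∈ I } → ℤ) × F.W) : Prop :=
  ∃ γ : Fin d → ℤ,
    (substCoef d I ε (F.floquet p.2 q.2)).coeff γ ≠ 0 ∧
    q.1 = (fun j => p.1 j + γ j.1) ∧
    ¬(γ = 0 ∧ p.2 = q.2)

end FlowerGraph

section SubstCoefLemmas

variable (d : ℕ) (I : Finset (Fin d)) (ε : Fin d → ℝ)

lemma substCoef_add (p q : AddMonoidAlgebra ℝ (Fin d → ℤ)) :
    substCoef d I ε (p + q) = substCoef d I ε p + substCoef d I ε q := by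
  classical
  simp only [substCoef]
  rw [AddMonoidAlgebra.coeff_add]
  exact Finsupp.sum_add_index' (fun a => by simp) (fun a b₁ b₂ => by
    rw [add_mul, AddMonoidAlgebra.single_add])

lemma substCoef_single (α : Fin d → ℤ) (c : ℝ) :
    substCoef d I ε (AddMonoidAlgebra.single α c)
      = AddMonoidAlgebra.single (fun i => if i ∈ I then α i else 0)
          (c * ∏ j ∈ Iᶜ, ε j ^ (α j)) := by
  classical
  simp only [substCoef]
  exact Finsupp.sum_single_index (by simp)

/-- the coefficient of `z^γ` in the substituted polynomial, as an additive hom. -/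
noncomputable def substAt (γ : Fin d → ℤ) : AddMonoidAlgebra ℝ (Fin d → ℤ) →+ ℝ :=
  AddMonoidHom.mk' (fun p => (substCoef d I ε p).coeff γ)
    (fun p q => by rw [substCoef_add]; rfl)

lemma substAt_apply (γ : Fin d → ℤ) (p : AddMonoidAlgebra ℝ (Fin d → ℤ)) :
    substAt d I ε γ p = (substCoef d I ε p).coeff γ := rfl

lemma substAt_single (γ α : Fin d → ℤ) (c : ℝ) :
    substAt d I ε γ (AddMonoidAlgebra.single α c) =
      if (fun i => if i ∈ I then α i else 0) = γ then c * ∏ j ∈ Iᶜ, ε j ^ (α j) else 0 := by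
  classical
  rw [substAt_apply, substCoef_single, AddMonoidAlgebra.coeff_single, Finsupp.single_apply]

end SubstCoefLemmas

namespace FlowerGraph

variable {d : ℕ} (F : FlowerGraph d)

lemma vtx_eq_cases (i : Fin F.numPetals) {j j' : Fin (F.len i + 1)}
    (h : F.vtx i j = F.vtx i j') :
    j = j' ∨ ((j = 0 ∨ j = Fin.last (F.len i)) ∧ (j' = 0 ∨ j' = Fin.last (F.len i))) := by
  by_cases hj : j = 0 ∨ j = Fin.last (F.len i)
  · right
    refine ⟨hj, ?_⟩
    by_contra hj'
    push_neg at hj'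
    have hu : F.vtx i j = F.u := by
      rcases hj with h0 | hl
      · rw [h0, F.vtx_zero]
      · rw [hl, F.vtx_last]
    exact F.interior_ne_u i j' hj'.1 hj'.2 (h ▸ hu)
  · push_neg at hj
    by_cases hj' : j' = 0 ∨ j' = Fin.last (F.len i)
    · exfalso
      have hu : F.vtx i j' = F.u := by
        rcases hj' with h0 | hl
        · rw [h0, F.vtx_zero]
        · rw [hl, F.vtx_last]
      exact F.interior_ne_u i j hj.1 hj.2 (h.trans hu)
    · push_neg at hj'
      exact Or.inl (F.interior_inj i j j' hj.1 hj.2 hj'.1 hj'.2 h)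

/-- numerical version of `vtx_eq_cases` -/
lemma vtx_eq_nat (i : Fin F.numPetals) {j j' : Fin (F.len i + 1)}
    (h : F.vtx i j = F.vtx i j') :
    j.1 = j'.1 ∨ ((j.1 = 0 ∨ j.1 = F.len i) ∧ (j'.1 = 0 ∨ j'.1 = F.len i)) := by
  rcases F.vtx_eq_cases i h with h | ⟨h1, h2⟩
  · exact Or.inl (congrArg Fin.val h)
  · refine Or.inr ⟨?_, ?_⟩
    · rcases h1 with h1 | h1 <;> [left; right] <;> rw [h1] <;> rfl
    · rcases h2 with h2 | h2 <;> [left; right] <;> rw [h2] <;> rfl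

lemma petal_ends_inj (i : Fin F.numPetals) (hk2 : F.len i ≠ 2) {m m' : Fin (F.len i)}
    (h : s(F.vtx i m.castSucc, F.vtx i m.succ) = s(F.vtx i m'.castSucc, F.vtx i m'.succ)) :
    m = m' := by
  have hm : m.1 < F.len i := m.2
  have hm' : m'.1 < F.len i := m'.2
  rw [Sym2.eq_iff] at h
  apply Fin.ext
  rcases h with ⟨h1, h2⟩ | ⟨h1, h2⟩
  · have c1 := F.vtx_eq_nat i h1
    have c2 := F.vtx_eq_nat i h2
    simp only [Fin.coe_castSucc, Fin.val_succ] at c1 c2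
    omega
  · have c1 := F.vtx_eq_nat i h1
    have c2 := F.vtx_eq_nat i h2
    simp only [Fin.coe_castSucc, Fin.val_succ] at c1 c2
    omega

/-- Any loop edge is the unique edge of a loop petal. -/
lemma loop_edge (e : F.K) (hdiag : (F.ends e).IsDiag) :
    ∃ i m, e = F.petalEdge i m ∧ F.len i = 1 := by
  by_cases hp : ∃ i m, e = F.petalEdge i m
  · obtain ⟨i, m, rfl⟩ := hp
    refine ⟨i, m, rfl, ?_⟩
    rw [F.petalEdge_ends, Sym2.mk_isDiag_iff] at hdiag
    have := F.vtx_eq_nat i hdiag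
    have hm : m.1 < F.len i := m.2
    simp only [Fin.coe_castSucc, Fin.val_succ] at this
    omega
  · push_neg at hp
    exact absurd hdiag (F.stem_loopfree e hp)

/-- A non-loop petal edge has an interior endpoint. -/
lemma petal_edge_interior (i : Fin F.numPetals) (m : Fin (F.len i)) (hk : F.len i ≠ 1) :
    ∃ j : Fin (F.len i + 1), j ≠ 0 ∧ j ≠ Fin.last (F.len i) ∧
      (j = m.castSucc ∨ j = m.succ) := by
  have hm : m.1 < F.len i := m.2
  have hk1 : 1 ≤ F.len i := F.len_pos i
  by_cases hm0 : m.1 = 0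
  · refine ⟨m.succ, ?_, ?_, Or.inr rfl⟩
    · exact Fin.succ_ne_zero m
    · simp only [ne_eq, Fin.ext_iff, Fin.val_succ, Fin.val_last]
      omega
  · refine ⟨m.castSucc, ?_, ?_, Or.inl rfl⟩
    · simp only [ne_eq, Fin.ext_iff, Fin.coe_castSucc, Fin.val_zero]
      omega
    · simp only [ne_eq, Fin.ext_iff, Fin.coe_castSucc, Fin.val_last]
      omega

/-- The only edges incident to `(v, v')` where one of the petal-`i` path endpoints is
interior are the corresponding petal edges. -/
lemma edge_ends_eq_petal (e : F.K) (i : Fin F.numPetals) (m : Fin (F.len i))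
    (hk1 : F.len i ≠ 1) (hk2 : F.len i ≠ 2)
    (hends : F.ends e = s(F.vtx i m.castSucc, F.vtx i m.succ)) :
    e = F.petalEdge i m := by
  obtain ⟨j, hj0, hjl, hjm⟩ := F.petal_edge_interior i m hk1
  have hmem : F.vtx i j ∈ F.ends e := by
    rw [hends]
    rcases hjm with h | h <;> rw [h] <;> simp [Sym2.mem_iff]
  obtain ⟨m', hm'⟩ := F.interior_incident e i j hj0 hjl hmem
  subst hm'
  rw [F.petalEdge_ends] at hends
  exact congrArg _ (F.petal_ends_inj i hk2 hends)

end FlowerGraph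

namespace FlowerGraph

variable {d : ℕ} (F : FlowerGraph d)

lemma edgeTerm_of_ne {v v' : F.W} {e : F.K} (h : F.ends e ≠ s(v, v')) :
    F.edgeTerm v v' e = 0 := by
  simp only [edgeTerm]
  rw [if_neg h]

lemma choose_eq {e : F.K} (hpe : ∃ i, e = F.petalEdge i (F.dIdx i))
    {i : Fin F.numPetals} {m : Fin (F.len i)} (h : e = F.petalEdge i m) :
    hpe.choose = i ∧ m = F.dIdx i := by
  have hs := hpe.choose_spec
  have : (⟨hpe.choose, F.dIdx hpe.choose⟩ : Σ i : Fin F.numPetals, Fin (F.len i))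
      = ⟨i, m⟩ := F.petalEdge_inj (hs.symm.trans h)
  obtain ⟨h1, h2⟩ := Sigma.mk.inj_iff.mp this
  subst h1
  exact ⟨rfl, (eq_of_heq h2).symm⟩

lemma edgeTerm_nondist {v v' : F.W} {e : F.K}
    (hnd : ∀ i', e ≠ F.petalEdge i' (F.dIdx i')) (hends : F.ends e = s(v, v')) :
    F.edgeTerm v v' e = AddMonoidAlgebra.single 0 (F.E e) := by
  simp only [edgeTerm]
  rw [if_pos hends, dif_neg (by push_neg; exact hnd)]

lemma edgeTerm_dist {v v' : F.W} (i : Fin F.numPetals)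
    (hends : F.ends (F.petalEdge i (F.dIdx i)) = s(v, v')) :
    F.edgeTerm v v' (F.petalEdge i (F.dIdx i)) =
      (if F.len i = 1 then
        AddMonoidAlgebra.single (Pi.single (F.ann i) (1 : ℤ)) (F.E (F.petalEdge i (F.dIdx i)))
          + AddMonoidAlgebra.single (Pi.single (F.ann i) (-1 : ℤ)) (F.E (F.petalEdge i (F.dIdx i)))
      else if v = F.distHead i ∧ v' = F.distTail i then
        AddMonoidAlgebra.single (Pi.single (F.ann i) (1 : ℤ)) (F.E (F.petalEdge i (F.dIdx i)))
      else if v' = F.distHead i ∧ v = F.distTail i then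
        AddMonoidAlgebra.single (Pi.single (F.ann i) (-1 : ℤ)) (F.E (F.petalEdge i (F.dIdx i)))
      else AddMonoidAlgebra.single 0 (F.E (F.petalEdge i (F.dIdx i)))) := by
  simp only [edgeTerm]
  rw [if_pos hends]
  have hpe : ∃ i', F.petalEdge i (F.dIdx i) = F.petalEdge i' (F.dIdx i') := ⟨i, rfl⟩
  rw [dif_pos hpe]
  have hc : hpe.choose = i := (F.choose_eq hpe rfl).1
  rw [hc]

end FlowerGraph

section Helpers

variable {d : ℕ} {I : Finset (Fin d)} {ε : Fin d → ℝ}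

lemma proj_single_mem {j : Fin d} (hI : j ∈ I) (s : ℤ) :
    (fun x => if x ∈ I then (Pi.single j s : Fin d → ℤ) x else 0) = Pi.single j s := by
  classical
  funext x
  by_cases hx : x = j
  · subst hx; rw [if_pos hI]
  · rw [Pi.single_eq_of_ne hx]; split <;> rfl

lemma proj_single_not {j : Fin d} (hI : j ∉ I) (s : ℤ) :
    (fun x => if x ∈ I then (Pi.single j s : Fin d → ℤ) x else 0) = 0 := by
  classical
  funext x
  by_cases hx : x ∈ I
  · rw [if_pos hx, Pi.single_eq_of_ne (fun h : x = j => hI (h ▸ hx))]; rfl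
  · rw [if_neg hx]; rfl

lemma proj_zero : (fun x => if x ∈ I then (0 : Fin d → ℤ) x else 0) = (0 : Fin d → ℤ) := by
  funext x; split <;> rfl

lemma prod_single_mem {j : Fin d} (hI : j ∈ I) (s : ℤ) :
    ∏ x ∈ Iᶜ, ε x ^ ((Pi.single j s : Fin d → ℤ) x) = 1 := by
  classical
  apply Finset.prod_eq_one
  intro x hx
  rw [Pi.single_eq_of_ne, zpow_zero]
  rintro rfl
  exact (Finset.mem_compl.mp hx) hI

lemma prod_single_not {j : Fin d} (hI : j ∉ I) (s : ℤ) :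
    ∏ x ∈ Iᶜ, ε x ^ ((Pi.single j s : Fin d → ℤ) x) = ε j ^ s := by
  classical
  rw [Finset.prod_eq_single j]
  · rw [Pi.single_eq_same]
  · intro x _ hx
    rw [Pi.single_eq_of_ne hx, zpow_zero]
  · intro h
    exact absurd (Finset.mem_compl.mpr hI) h

lemma prod_zero : ∏ x ∈ Iᶜ, ε x ^ ((0 : Fin d → ℤ) x) = 1 := by
  apply Finset.prod_eq_one
  intro x _
  exact zpow_zero _

lemma pi_single_ne_zero {j : Fin d} {s : ℤ} (hs : s = 1 ∨ s = -1) :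
    Pi.single j s ≠ (0 : Fin d → ℤ) := by
  intro h
  have := congrFun h j
  rw [Pi.single_eq_same] at this
  rcases hs with rfl | rfl <;> simp at this

end Helpers

namespace FlowerGraph

variable {d : ℕ} (F : FlowerGraph d) (I : Finset (Fin d)) (ε : Fin d → ℝ)

lemma floquet_off_diag {v v' : F.W} (h : v ≠ v') :
    F.floquet v v' = ∑ e : F.K, F.edgeTerm v v' e := by
  simp [floquet, h]

/-- Every edge joining two non-interior distinct vertices is a stem edge. -/
lemma edge_stem_of_not_interior {v v' : F.W} (hvv : v ≠ v')
    (hv : ¬ F.IsInteriorVtx v) (hv' : ¬ F.IsInteriorVtx v')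
    {e : F.K} (hends : F.ends e = s(v, v')) :
    ∀ i j, e ≠ F.petalEdge i j := by
  intro i m he
  subst he
  rw [F.petalEdge_ends] at hends
  by_cases hk : F.len i = 1
  · -- the edge is a loop at u, so v = v'
    have h0 : F.vtx i m.castSucc = F.u := by
      have : m.castSucc = 0 := by
        apply Fin.ext
        have := m.2; simp only [Fin.coe_castSucc, Fin.val_zero]; omega
      rw [this, F.vtx_zero]
    have h1 : F.vtx i m.succ = F.u := by
      have : m.succ = Fin.last (F.len i) := by
        apply Fin.ext
        have := m.2; simp only [Fin.val_succ, Fin.val_last]; omega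
      rw [this, F.vtx_last]
    rw [h0, h1, Sym2.eq_iff] at hends
    rcases hends with ⟨h2, h3⟩ | ⟨h2, h3⟩ <;> exact hvv ((h2.symm.trans h3) ▸ rfl)
  · obtain ⟨j, hj0, hjl, hjm⟩ := F.petal_edge_interior i m hk
    have hmem : F.vtx i j ∈ s(v, v') := by
      rw [← hends]
      rcases hjm with h | h <;> rw [h] <;> simp [Sym2.mem_iff]
    rw [Sym2.mem_iff] at hmem
    rcases hmem with h | h
    · exact hv ⟨i, j, hj0, hjl, h⟩
    · exact hv' ⟨i, j, hj0, hjl, h⟩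

lemma entry_stem (hE : ∀ e, F.E e = 1) {v v' : F.W} (hvv : v ≠ v')
    (hv : ¬ F.IsInteriorVtx v) (hv' : ¬ F.IsInteriorVtx v')
    (e₀ : F.K) (hends₀ : F.ends e₀ = s(v, v')) :
    (substCoef d I ε (F.floquet v v')).coeff 0 ≠ 0 := by
  classical
  rw [← substAt_apply, F.floquet_off_diag hvv, map_sum]
  have key : ∀ e : F.K, substAt d I ε 0 (F.edgeTerm v v' e)
      = if F.ends e = s(v, v') then 1 else 0 := by
    intro e
    by_cases hev : F.ends e = s(v, v')
    · have hstem := F.edge_stem_of_not_interior hvv hv hv' hev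
      rw [F.edgeTerm_nondist (fun i' => hstem i' (F.dIdx i')) hev, substAt_single,
        if_pos hev, hE]
      rw [if_pos proj_zero, prod_zero, one_mul]
    · rw [F.edgeTerm_of_ne hev, map_zero, if_neg hev]
  apply ne_of_gt
  rw [Finset.sum_congr rfl (fun e _ => key e)]
  apply Finset.sum_pos'
  · intro e _
    split <;> norm_num
  · exact ⟨e₀, Finset.mem_univ e₀, by rw [if_pos hends₀]; norm_num⟩

end FlowerGraph

namespace FlowerGraph

variable {d : ℕ} (F : FlowerGraph d) (I : Finset (Fin d)) (ε : Fin d → ℝ)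

lemma entry_petal (hE : ∀ e, F.E e = 1) (hε : ∀ j ∉ I, ε j = 1 ∨ ε j = -1)
    (i : Fin F.numPetals) (hk1 : F.len i ≠ 1) (hk2 : F.len i ≠ 2) (m : Fin (F.len i)) :
    F.vtx i m.castSucc ≠ F.vtx i m.succ ∧
    ∃ γ : Fin d → ℤ,
      (substCoef d I ε (F.floquet (F.vtx i m.castSucc) (F.vtx i m.succ))).coeff γ ≠ 0 ∧
      (fun j : {x // x ∈ I} => γ j.1) =
        (if m = F.dIdx i ∧ F.ann i ∈ I then
          (fun j : {x // x ∈ I} => (Pi.single (F.ann i)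
            (if F.orient i then (1:ℤ) else -1) : Fin d → ℤ) j.1)
        else 0) := by
  classical
  set v := F.vtx i m.castSucc with hv
  set v' := F.vtx i m.succ with hv'
  have hne : v ≠ v' := by
    intro h
    have := F.vtx_eq_nat i h
    have hm := m.2
    simp only [Fin.coe_castSucc, Fin.val_succ] at this
    omega
  refine ⟨hne, ?_⟩
  have hends0 : F.ends (F.petalEdge i m) = s(v, v') := F.petalEdge_ends i m
  have hsum : F.floquet v v' = F.edgeTerm v v' (F.petalEdge i m) := by
    rw [F.floquet_off_diag hne]
    refine Finset.sum_eq_single _ (fun e _ hne' => F.edgeTerm_of_ne ?_) (by simp)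
    intro hev
    exact hne' (F.edge_ends_eq_petal e i m hk1 hk2 hev)
  by_cases hdm : m = F.dIdx i
  · -- distinguished edge
    subst hdm
    rw [F.edgeTerm_dist i hends0, if_neg hk1] at hsum
    set s : ℤ := if F.orient i then 1 else -1 with hsdef
    have hterm : F.floquet v v' =
        AddMonoidAlgebra.single (Pi.single (F.ann i) s) 1 := by
      rw [hsum, hE]
      by_cases ho : F.orient i
      · rw [if_pos ⟨by rw [hv]; simp [distHead, ho], by rw [hv']; simp [distTail, ho]⟩,
          hsdef, if_pos ho]
      · rw [if_neg, if_pos ⟨by rw [hv']; simp [distHead, ho], by rw [hv]; simp [distTail, ho]⟩,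
          hsdef, if_neg ho]
        rintro ⟨h1, h2⟩
        simp only [distHead, if_neg ho] at h1
        exact hne (h1.trans hv'.symm)
    by_cases hI : F.ann i ∈ I
    · refine ⟨Pi.single (F.ann i) s, ?_, ?_⟩
      · rw [hterm, ← substAt_apply, substAt_single, if_pos (proj_single_mem hI s),
          prod_single_mem hI s]
        norm_num
      · rw [if_pos ⟨rfl, hI⟩]
    · refine ⟨0, ?_, ?_⟩
      · rw [hterm, ← substAt_apply, substAt_single, if_pos ((proj_single_not hI s)),
          prod_single_not hI s, one_mul]
        rcases hε (F.ann i) hI with h | h <;> rw [h]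
        · simp
        · apply zpow_ne_zero; norm_num
      · rw [if_neg (fun h => hI h.2)]
        rfl
  · -- non-distinguished edge
    have hnd : ∀ i', F.petalEdge i m ≠ F.petalEdge i' (F.dIdx i') := by
      intro i' h
      have : (⟨i, m⟩ : Σ i : Fin F.numPetals, Fin (F.len i)) = ⟨i', F.dIdx i'⟩ :=
        F.petalEdge_inj h
      obtain ⟨h1, h2⟩ := Sigma.mk.inj_iff.mp this
      subst h1
      exact hdm (eq_of_heq h2)
    rw [F.edgeTerm_nondist hnd hends0, hE] at hsum
    refine ⟨0, ?_, ?_⟩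
    · rw [hsum, ← substAt_apply, substAt_single, if_pos proj_zero, prod_zero]
      norm_num
    · rw [if_neg (fun h => hdm h.1)]
      rfl

end FlowerGraph

namespace FlowerGraph

variable {d : ℕ} (F : FlowerGraph d) (I : Finset (Fin d)) (ε : Fin d → ℝ)

lemma loop_petal_ends (i : Fin F.numPetals) (hk : F.len i = 1) (m : Fin (F.len i)) :
    F.ends (F.petalEdge i m) = s(F.u, F.u) := by
  rw [F.petalEdge_ends]
  have h0 : m.castSucc = 0 := by
    apply Fin.ext
    have := m.2; simp only [Fin.coe_castSucc, Fin.val_zero]; omega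
  have h1 : m.succ = Fin.last (F.len i) := by
    apply Fin.ext
    have := m.2; simp only [Fin.val_succ, Fin.val_last]; omega
  rw [h0, h1, F.vtx_zero, F.vtx_last]

lemma entry_loop (hE : ∀ e, F.E e = 1)
    (i : Fin F.numPetals) (hk : F.len i = 1) (hI : F.ann i ∈ I)
    (s : ℤ) (hs : s = 1 ∨ s = -1) :
    (substCoef d I ε (F.floquet F.u F.u)).coeff (Pi.single (F.ann i) s) ≠ 0 := by
  classical
  have hγ0 : (Pi.single (F.ann i) s : Fin d → ℤ) ≠ 0 := pi_single_ne_zero hs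
  have hnePM : ∀ (j : Fin d) (a b : ℤ), a ≠ b →
      (Pi.single j a : Fin d → ℤ) ≠ Pi.single j b := by
    intro j a b hab h
    exact hab (by simpa using congrFun h j)
  have hfl : F.floquet F.u F.u
      = AddMonoidAlgebra.single 0 (F.V F.u) + ∑ e : F.K, F.edgeTerm F.u F.u e := by
    simp [floquet]
  rw [← substAt_apply, hfl, map_add, map_sum, substAt_single, if_neg, zero_add]
  swap
  · rw [proj_zero]; exact fun h => hγ0 h.symm
  apply ne_of_gt
  apply Finset.sum_pos'
  · -- all terms are nonnegative
    intro e _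
    by_cases hev : F.ends e = s(F.u, F.u)
    · have hdiag : (F.ends e).IsDiag := by rw [hev]; exact Sym2.mk_isDiag_iff.mpr rfl
      obtain ⟨i', m', he, hk'⟩ := F.loop_edge e hdiag
      have hm' : m' = F.dIdx i' := by
        apply Fin.ext
        have h1 := m'.2
        have h2 := (F.dIdx i').2
        omega
      rw [hm'] at he
      subst he
      rw [F.edgeTerm_dist i' hev, if_pos hk', hE, map_add, substAt_single, substAt_single]
      by_cases hI' : F.ann i' ∈ I
      · simp only [proj_single_mem hI' 1, proj_single_mem hI' (-1),
          prod_single_mem hI' 1, prod_single_mem hI' (-1), one_mul]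
        split_ifs <;> norm_num
      · simp only [proj_single_not hI' 1, proj_single_not hI' (-1)]
        rw [if_neg (fun h => hγ0 h.symm), if_neg (fun h => hγ0 h.symm)]
        norm_num
    · rw [F.edgeTerm_of_ne hev, map_zero]
  · -- the loop edge of petal i gives a positive term
    refine ⟨F.petalEdge i (F.dIdx i), Finset.mem_univ _, ?_⟩
    have hev : F.ends (F.petalEdge i (F.dIdx i)) = s(F.u, F.u) := F.loop_petal_ends i hk _
    rw [F.edgeTerm_dist i hev, if_pos hk, hE, map_add, substAt_single, substAt_single]
    simp only [proj_single_mem hI 1, proj_single_mem hI (-1),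
      prod_single_mem hI 1, prod_single_mem hI (-1), one_mul]
    rcases hs with rfl | rfl
    · rw [if_pos rfl, if_neg (hnePM _ _ _ (by norm_num))]
      norm_num
    · rw [if_neg (hnePM _ _ _ (by norm_num)), if_pos rfl]
      norm_num

end FlowerGraph

namespace FlowerGraph

variable {d : ℕ} (F : FlowerGraph d) (I : Finset (Fin d)) (ε : Fin d → ℝ)

/-- accumulated β-shift after traversing the first `t` edges of petal `i` -/
def shiftUpTo (i : Fin F.numPetals) (t : ℕ) : ({x // x ∈ I} → ℤ) := fun j =>
  if F.ann i ∈ I ∧ (F.dIdx i).1 < t then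
    (Pi.single (F.ann i) (if F.orient i then (1:ℤ) else -1) : Fin d → ℤ) j.1
  else 0

/-- single step in the projection graph -/
lemma step_of {v v' : F.W} (γ : Fin d → ℤ)
    (h1 : (substCoef d I ε (F.floquet v v')).coeff γ ≠ 0) (h2 : ¬(γ = 0 ∧ v = v'))
    (β : {x // x ∈ I} → ℤ) :
    Relation.ReflTransGen (fun p q => F.projAdj I ε p q ∨ F.projAdj I ε q p)
      (β, v) ((fun j => β j + γ j.1), v') :=
  Relation.ReflTransGen.single (Or.inl ⟨γ, h1, rfl, h2⟩)

lemma R_symm {p q : ({x // x ∈ I} → ℤ) × F.W}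
    (h : Relation.ReflTransGen (fun p q => F.projAdj I ε p q ∨ F.projAdj I ε q p) p q) :
    Relation.ReflTransGen (fun p q => F.projAdj I ε p q ∨ F.projAdj I ε q p) q p :=
  (@Relation.ReflTransGen.stdSymm _ _ ⟨fun _ _ h' => h'.symm⟩).symm _ _ h

lemma traverse (hE : ∀ e, F.E e = 1) (hε : ∀ j ∉ I, ε j = 1 ∨ ε j = -1)
    (i : Fin F.numPetals) (hk1 : F.len i ≠ 1) (hk2 : F.len i ≠ 2) :
    ∀ t : ℕ, (ht : t ≤ F.len i) → ∀ β : {x // x ∈ I} → ℤ,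
      Relation.ReflTransGen (fun p q => F.projAdj I ε p q ∨ F.projAdj I ε q p)
        (β, F.u) ((fun j => β j + shiftUpTo F I i t j), F.vtx i ⟨t, by omega⟩) := by
  intro t
  induction t with
  | zero =>
    intro ht β
    have hpair : ((fun j => β j + shiftUpTo F I i 0 j), F.vtx i ⟨0, by omega⟩)
        = (β, F.u) := by
      have h0 : (⟨0, by omega⟩ : Fin (F.len i + 1)) = 0 := rfl
      rw [h0, F.vtx_zero]
      congr 1
      funext j
      simp [shiftUpTo]
    rw [hpair]
  | succ t ih =>
    intro ht β
    have ht' : t ≤ F.len i := by omega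
    have htlt : t < F.len i := by omega
    set m : Fin (F.len i) := ⟨t, htlt⟩ with hm
    obtain ⟨hne, γ, hcoef, hrestr⟩ := F.entry_petal I ε hE hε i hk1 hk2 m
    have hcs : (⟨t, by omega⟩ : Fin (F.len i + 1)) = m.castSucc := rfl
    have hsc : (⟨t + 1, by omega⟩ : Fin (F.len i + 1)) = m.succ := rfl
    have step := F.step_of I ε γ hcoef (fun h => hne (by rw [h.2])) (fun j => β j + shiftUpTo F I i t j)
    have hβ : (fun j => (β j + shiftUpTo F I i t j) + γ j.1)
        = (fun j => β j + shiftUpTo F I i (t+1) j) := by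
      funext j
      have hγj : γ j.1 = (if m = F.dIdx i ∧ F.ann i ∈ I then
          (Pi.single (F.ann i) (if F.orient i then (1:ℤ) else -1) : Fin d → ℤ) j.1
          else 0) := by
        have := congrFun hrestr j
        rw [this]
        split <;> rfl
      have hmd : (m = F.dIdx i) ↔ ((F.dIdx i).1 = t) := by
        rw [Fin.ext_iff, hm]
        exact ⟨fun h => h.symm, fun h => h.symm⟩
      simp only [shiftUpTo, hγj]
      by_cases hA : F.ann i ∈ I
      · by_cases h1 : (F.dIdx i).1 < t
        · have hc1 : F.ann i ∈ I ∧ (F.dIdx i).1 < t := ⟨hA, h1⟩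
          have hc3 : F.ann i ∈ I ∧ (F.dIdx i).1 < t + 1 := ⟨hA, by omega⟩
          have hne' : ¬(m = F.dIdx i ∧ F.ann i ∈ I) := fun h => by
            have := hmd.mp h.1; omega
          rw [if_pos hc1, if_pos hc3, if_neg hne']
          ring
        · by_cases h2 : (F.dIdx i).1 = t
          · have hc2 : m = F.dIdx i ∧ F.ann i ∈ I := ⟨hmd.mpr h2, hA⟩
            have hc3 : F.ann i ∈ I ∧ (F.dIdx i).1 < t + 1 := ⟨hA, by omega⟩
            rw [if_neg (fun h => h1 h.2), if_pos hc2, if_pos hc3]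
            ring
          · have h1' : ¬ (F.ann i ∈ I ∧ (F.dIdx i).1 < t + 1) := fun h => by omega
            rw [if_neg (fun h => h1 h.2), if_neg (fun h => h2 (hmd.mp h.1)), if_neg h1']
            ring
      · rw [if_neg (fun h => hA h.1), if_neg (fun h => hA h.2), if_neg (fun h => hA h.1)]
        ring
    rw [hsc, ← hβ]
    exact (ih ht' β).tail (Or.inl ⟨γ, hcoef, rfl, fun h => hne (by exact h.2)⟩)

end FlowerGraph

namespace FlowerGraph

variable {d : ℕ} (F : FlowerGraph d) (I : Finset (Fin d)) (ε : Fin d → ℝ)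

lemma cycle_shift (hE : ∀ e, F.E e = 1) (hε : ∀ j ∉ I, ε j = 1 ∨ ε j = -1)
    (i : Fin F.numPetals) (hk1 : F.len i ≠ 1) (hk2 : F.len i ≠ 2)
    (β : {x // x ∈ I} → ℤ) :
    Relation.ReflTransGen (fun p q => F.projAdj I ε p q ∨ F.projAdj I ε q p)
      (β, F.u) ((fun j => β j + shiftUpTo F I i (F.len i) j), F.u) := by
  have h := F.traverse I ε hE hε i hk1 hk2 (F.len i) le_rfl β
  have hlast : (⟨F.len i, by omega⟩ : Fin (F.len i + 1)) = Fin.last (F.len i) := rfl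
  rw [hlast, F.vtx_last] at h
  exact h

lemma move_unit (hE : ∀ e, F.E e = 1) (hε : ∀ j ∉ I, ε j = 1 ∨ ε j = -1)
    (hsurj : Function.Surjective F.ann) (hno2 : ∀ i, F.len i ≠ 2)
    (j : Fin d) (hj : j ∈ I) (s : ℤ) (hs : s = 1 ∨ s = -1) (β : {x // x ∈ I} → ℤ) :
    Relation.ReflTransGen (fun p q => F.projAdj I ε p q ∨ F.projAdj I ε q p)
      (β, F.u) ((fun t => β t + (Pi.single j s : Fin d → ℤ) t.1), F.u) := by
  classical
  obtain ⟨i, rfl⟩ := hsurj j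
  by_cases hk : F.len i = 1
  · exact F.step_of I ε (Pi.single (F.ann i) s) (F.entry_loop I ε hE i hk hj s hs)
      (fun h => pi_single_ne_zero hs h.1) β
  · set s₀ : ℤ := if F.orient i then 1 else -1 with hs₀
    have hs₀' : s₀ = 1 ∨ s₀ = -1 := by rw [hs₀]; split <;> simp
    have main : ∀ β' : {x // x ∈ I} → ℤ,
        Relation.ReflTransGen (fun p q => F.projAdj I ε p q ∨ F.projAdj I ε q p)
          (β', F.u) ((fun t => β' t + (Pi.single (F.ann i) s₀ : Fin d → ℤ) t.1), F.u) := by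
      intro β'
      have h := F.cycle_shift I ε hE hε i hk (hno2 i) β'
      have heq : (fun t : {x // x ∈ I} => β' t + shiftUpTo F I i (F.len i) t)
          = fun t => β' t + (Pi.single (F.ann i) s₀ : Fin d → ℤ) t.1 := by
        funext t
        have hd : (F.dIdx i).1 < F.len i := (F.dIdx i).2
        simp only [shiftUpTo, hs₀]
        rw [if_pos ⟨hj, hd⟩]
      rw [heq] at h
      exact h
    by_cases hss : s = s₀
    · rw [hss]; exact main β
    · have hsum : s + s₀ = 0 := by
        rcases hs with rfl | rfl <;> rcases hs₀' with h | h <;> omega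
      set b : {x // x ∈ I} → ℤ := fun t => β t + (Pi.single (F.ann i) s : Fin d → ℤ) t.1
        with hb
      have h2 := main b
      have heq : (fun t : {x // x ∈ I} => b t + (Pi.single (F.ann i) s₀ : Fin d → ℤ) t.1)
          = β := by
        funext t
        rw [hb]
        simp only
        have hps : (Pi.single (F.ann i) s : Fin d → ℤ) t.1
            + (Pi.single (F.ann i) s₀ : Fin d → ℤ) t.1 = 0 := by
          rcases eq_or_ne t.1 (F.ann i) with h | h
          · rw [h, Pi.single_eq_same, Pi.single_eq_same]; omega
          · rw [Pi.single_eq_of_ne h, Pi.single_eq_of_ne h]; ring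
        linarith [hps]
      rw [heq] at h2
      exact F.R_symm I ε h2

lemma move_any (hE : ∀ e, F.E e = 1) (hε : ∀ j ∉ I, ε j = 1 ∨ ε j = -1)
    (hsurj : Function.Surjective F.ann) (hno2 : ∀ i, F.len i ≠ 2) :
    ∀ (n : ℕ) (δ : {x // x ∈ I} → ℤ), (∑ t, (δ t).natAbs) = n →
      ∀ β : {x // x ∈ I} → ℤ,
      Relation.ReflTransGen (fun p q => F.projAdj I ε p q ∨ F.projAdj I ε q p)
        (β, F.u) ((fun t => β t + δ t), F.u) := by
  classical
  intro n
  induction n using Nat.strong_induction_on with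
  | _ n ih =>
    intro δ hδ β
    rcases eq_or_ne n 0 with rfl | hn
    · have hz : ∀ t, δ t = 0 := by
        intro t
        have := Finset.sum_eq_zero_iff.mp hδ t (Finset.mem_univ t)
        omega
      have hpair : (((fun t => β t + δ t) : {x // x ∈ I} → ℤ), F.u)
          = ((β : {x // x ∈ I} → ℤ), F.u) := by
        congr 1
        funext t
        rw [hz t]
        ring
      rw [hpair]
    · have hex : ∃ t, δ t ≠ 0 := by
        by_contra h
        push_neg at h
        exact hn (hδ ▸ (Finset.sum_eq_zero fun t _ => by rw [h t]; rfl).symm).symm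
      obtain ⟨t₀, ht₀⟩ := hex
      set s : ℤ := if 0 < δ t₀ then 1 else -1 with hsd
      have hs : s = 1 ∨ s = -1 := by rw [hsd]; split <;> simp
      set β₁ : {x // x ∈ I} → ℤ := fun t => β t + (Pi.single t₀.1 s : Fin d → ℤ) t.1
        with hβ₁
      have step := F.move_unit I ε hE hε hsurj hno2 t₀.1 t₀.2 s hs β
      set δ' : {x // x ∈ I} → ℤ := fun t => δ t - (Pi.single t₀.1 s : Fin d → ℤ) t.1
        with hδ'
      have hsame : ∀ t : {x // x ∈ I}, t ≠ t₀ → δ' t = δ t := by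
        intro t ht
        rw [hδ']
        simp only
        rw [Pi.single_eq_of_ne (fun hc => ht (Subtype.ext hc))]
        ring
      have ht₀' : (δ' t₀).natAbs = (δ t₀).natAbs - 1 ∧ 1 ≤ (δ t₀).natAbs := by
        rw [hδ']
        simp only [Pi.single_eq_same]
        rw [hsd]
        split <;> omega
      have hm : (∑ t, (δ' t).natAbs) = n - 1 := by
        rw [← Finset.add_sum_erase Finset.univ (fun t => (δ t).natAbs)
          (Finset.mem_univ t₀)] at hδ
        rw [← Finset.add_sum_erase Finset.univ (fun t => (δ' t).natAbs)
          (Finset.mem_univ t₀)]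
        have hrest : ∑ x ∈ Finset.univ.erase t₀, (δ' x).natAbs
            = ∑ x ∈ Finset.univ.erase t₀, (δ x).natAbs :=
          Finset.sum_congr rfl (fun t ht => by rw [hsame t (Finset.mem_erase.mp ht).1])
        omega
      have h2 := ih (n - 1) (by omega) δ' hm β₁
      have hend : (fun t => β₁ t + δ' t) = fun t => β t + δ t := by
        funext t
        rw [hβ₁, hδ']
        simp only
        ring
      rw [hend] at h2
      exact step.trans h2

lemma reach_stem (hE : ∀ e, F.E e = 1) {v : F.W}
    (h : Relation.ReflTransGen F.stemAdj F.u v) (β : {x // x ∈ I} → ℤ) :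
    Relation.ReflTransGen (fun p q => F.projAdj I ε p q ∨ F.projAdj I ε q p)
      (β, F.u) (β, v) := by
  induction h with
  | refl => exact Relation.ReflTransGen.refl
  | @tail b c h1 h2 ih =>
    obtain ⟨e, hnd, hends⟩ := h2
    have hbc : b ≠ c := by
      intro hcc
      exact F.stem_loopfree e hnd (by rw [hends, hcc]; exact Sym2.mk_isDiag_iff.mpr rfl)
    have hbint : ¬ F.IsInteriorVtx b := by
      rintro ⟨i, j, hj0, hjl, heq⟩
      exact F.stem_not_interior e hnd i j hj0 hjl
        (by rw [hends, heq]; exact Sym2.mem_mk_left _ _)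
    have hcint : ¬ F.IsInteriorVtx c := by
      rintro ⟨i, j, hj0, hjl, heq⟩
      exact F.stem_not_interior e hnd i j hj0 hjl
        (by rw [hends, heq]; exact Sym2.mem_mk_right _ _)
    refine ih.tail (Or.inl ⟨0, F.entry_stem I ε hE hbc hbint hcint e hends, ?_, ?_⟩)
    · funext t
      simp
    · exact fun h => hbc h.2

end FlowerGraph

namespace FlowerGraph

variable {d : ℕ} (F : FlowerGraph d) (I : Finset (Fin d)) (ε : Fin d → ℝ)

lemma reach_u (hE : ∀ e, F.E e = 1) (hε : ∀ j ∉ I, ε j = 1 ∨ ε j = -1)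
    (hstem : ∀ v : F.W, ¬ F.IsInteriorVtx v → Relation.ReflTransGen F.stemAdj F.u v)
    (hno2 : ∀ i, F.len i ≠ 2) (p : ({x // x ∈ I} → ℤ) × F.W) :
    ∃ β₀, Relation.ReflTransGen (fun p q => F.projAdj I ε p q ∨ F.projAdj I ε q p)
      (β₀, F.u) p := by
  obtain ⟨β, v⟩ := p
  by_cases hint : F.IsInteriorVtx v
  · obtain ⟨i, j, hj0, hjl, hvj⟩ := hint
    have hk1 : F.len i ≠ 1 := by
      intro h
      have h0 : j.1 ≠ 0 := fun hc => hj0 (Fin.ext hc)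
      have hl : j.1 ≠ F.len i := fun hc => hjl (Fin.ext hc)
      have := j.2
      omega
    have hk2 := hno2 i
    have htj : j.1 ≤ F.len i := by have := j.2; omega
    set βs : {x // x ∈ I} → ℤ := fun t => β t - shiftUpTo F I i j.1 t with hβs
    have h := F.traverse I ε hE hε i hk1 hk2 j.1 htj βs
    have hfin : (⟨j.1, by omega⟩ : Fin (F.len i + 1)) = j := Fin.ext rfl
    rw [hfin, hvj] at h
    have hfun : (fun t : {x // x ∈ I} => βs t + shiftUpTo F I i j.1 t) = β := by
      funext t
      rw [hβs]
      simp only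
      ring
    rw [hfun] at h
    exact ⟨βs, h⟩
  · exact ⟨β, F.reach_stem I ε hE (hstem v hint) β⟩

end FlowerGraph

/-- Schrödinger case: if the stem graph of a flower graph is connected (every non-interior
vertex is joined to `u` by a path of stem edges), its annotation is surjective, and no petal
is a 2-cycle, then every coordinate projection graph `Γ′` is connected. -/
theorem stmt_7 (d : ℕ) (hd : 1 ≤ d) (F : FlowerGraph d)
    (hSchrodinger : ∀ e, F.E e = 1)
    (hstem : ∀ v : F.W, ¬ F.IsInteriorVtx v → Relation.ReflTransGen F.stemAdj F.u v)
    (hsurj : Function.Surjective F.ann)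
    (hno2 : ∀ i, F.len i ≠ 2) :
    ∀ (I : Finset (Fin d)) (ε : Fin d → ℝ), (∀ j ∉ I, ε j = 1 ∨ ε j = -1) →
      ∀ p q : ({ j : Fin d // j ∈ I } → ℤ) × F.W,
        Relation.ReflTransGen
          (fun p q => F.projAdj I ε p q ∨ F.projAdj I ε q p) p q := by
  intro I ε hε p q
  obtain ⟨βp, hp⟩ := F.reach_u I ε hSchrodinger hε hstem hno2 p
  obtain ⟨βq, hq⟩ := F.reach_u I ε hSchrodinger hε hstem hno2 q
  set δ : {x // x ∈ I} → ℤ := fun t => βq t - βp t with hδ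
  have hmid := F.move_any I ε hSchrodinger hε hsurj hno2
    (∑ t, (δ t).natAbs) δ rfl βp
  have hfun : (fun t : {x // x ∈ I} => βp t + δ t) = βq := by
    funext t
    rw [hδ]
    simp only
    ring
  rw [hfun] at hmid
  exact ((F.R_symm I ε hp).trans hmid).trans hq
end

section
/- In the isthmus setting (no genericity needed), for every (z,λ) ∈ (ℂ∖{0})^d × ℂ and every j = 1,…,d, one has ∂D/∂z_j(z,λ) = E_j·(1 − z_j⁻²)·P_{f(j)}(z,λ)·Q_{f(j)}(z,λ). -/
/-- The principal minor: determinant of the submatrix of `N` on rows and columns of index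
`< s` (equal to `1` when `s = 0`). -/
noncomputable def Pminor {n : ℕ} (N : Matrix (Fin n) (Fin n) ℂ) (s : ℕ) : ℂ :=
  (N.submatrix (fun i : Fin (min s n) => Fin.castLE (min_le_right s n) i)
    (fun i : Fin (min s n) => Fin.castLE (min_le_right s n) i)).det

/-- The co-principal minor: determinant of the submatrix of `N` on rows and columns of index
`> s` (equal to `1` when `s = n − 1`). -/
noncomputable def Qminor {n : ℕ} (N : Matrix (Fin n) (Fin n) ℂ) (s : ℕ) : ℂ :=
  (N.submatrix (fun i : Fin (n - 1 - s) => (⟨s + 1 + i.1, by have := i.2; omega⟩ : Fin n))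
    (fun i : Fin (n - 1 - s) => (⟨s + 1 + i.1, by have := i.2; omega⟩ : Fin n))).det

/-- The Floquet matrix of a periodic isthmus-connected graph: the matrix `M` with
`E_j·(z_j + z_j⁻¹)` added to the diagonal entry `(f j, f j)` for each `j`. -/
noncomputable def isthH (a m b d : ℕ) (M : Matrix (Fin (a + m + b)) (Fin (a + m + b)) ℝ)
    (f : Fin d → Fin (a + m + b)) (E : Fin d → ℝ) (z : Fin d → ℂ) :
    Matrix (Fin (a + m + b)) (Fin (a + m + b)) ℂ :=
  Matrix.of fun i i' => (M i i' : ℂ) +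
    if i = i' then ∑ j, (if f j = i then (E j : ℂ) * (z j + (z j)⁻¹) else 0) else 0

/-- The dispersion polynomial `D(z,λ) = det(H(z) − λ·I)`. -/
noncomputable def isthD (a m b d : ℕ) (M : Matrix (Fin (a + m + b)) (Fin (a + m + b)) ℝ)
    (f : Fin d → Fin (a + m + b)) (E : Fin d → ℝ) (z : Fin d → ℂ) (lam : ℂ) : ℂ :=
  (isthH a m b d M f E z - lam • 1).det

/-- `P_s(z,λ)`: the principal minor of `H(z) − λ·I` on indices `< s`. -/
noncomputable def isthP (a m b d : ℕ) (M : Matrix (Fin (a + m + b)) (Fin (a + m + b)) ℝ)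
    (f : Fin d → Fin (a + m + b)) (E : Fin d → ℝ) (s : ℕ) (z : Fin d → ℂ) (lam : ℂ) : ℂ :=
  Pminor (isthH a m b d M f E z - lam • 1) s

/-- `Q_s(z,λ)`: the co-principal minor of `H(z) − λ·I` on indices `> s`. -/
noncomputable def isthQ (a m b d : ℕ) (M : Matrix (Fin (a + m + b)) (Fin (a + m + b)) ℝ)
    (f : Fin d → Fin (a + m + b)) (E : Fin d → ℝ) (s : ℕ) (z : Fin d → ℂ) (lam : ℂ) : ℂ :=
  Qminor (isthH a m b d M f E z - lam • 1) s

/-- The partial derivative `∂D/∂z_j`. -/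
noncomputable def isthPD (a m b d : ℕ) (M : Matrix (Fin (a + m + b)) (Fin (a + m + b)) ℝ)
    (f : Fin d → Fin (a + m + b)) (E : Fin d → ℝ) (j : Fin d) (z : Fin d → ℂ) (lam : ℂ) : ℂ :=
  deriv (fun t => isthD a m b d M f E (Function.update z j t) lam) (z j)

/-- The second partial derivative `∂²D/∂z_j∂z_i`. -/
noncomputable def isthPD2 (a m b d : ℕ) (M : Matrix (Fin (a + m + b)) (Fin (a + m + b)) ℝ)
    (f : Fin d → Fin (a + m + b)) (E : Fin d → ℝ) (i j : Fin d) (z : Fin d → ℂ) (lam : ℂ) : ℂ :=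
  deriv (fun s => isthPD a m b d M f E i (Function.update z j s) lam) (z j)

lemma det_pivot {n : ℕ} (N : Matrix (Fin n) (Fin n) ℂ) (s : Fin n)
    (hz : ∀ i k : Fin n, (i:ℕ) < (s:ℕ) → (s:ℕ) < (k:ℕ) → N i k = 0 ∧ N k i = 0) :
    (N.updateRow s (Pi.single s 1)).det = Pminor N (s:ℕ) * Qminor N (s:ℕ) := by
  classical
  set p : ℕ := (s : ℕ) with hpdef
  have hp : p < n := s.2
  set q : ℕ := n - 1 - p with hqdef
  set R := N.updateRow s (Pi.single s 1) with hR
  set N'' := R.updateCol s (Pi.single s 1) with hN''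
  -- step 1 : R.det = N''.det
  have hw : ∀ i : Fin n, R i s = (Pi.single s 1 : Fin n → ℂ) i + (if i = s then 0 else N i s) := by
    intro i
    by_cases h : i = s
    · subst h; simp [hR, Matrix.updateRow_self, Pi.single_eq_same]
    · simp [hR, Matrix.updateRow_ne h, Pi.single_eq_of_ne h, h]
  have hstep1 : R.det = N''.det := by
    have h0 : R = R.updateCol s (fun i => R i s) := (Matrix.updateCol_eq_self R s).symm
    rw [h0]
    have h1 : (fun i => R i s) = (Pi.single s 1 : Fin n → ℂ) + (fun i => if i = s then 0 else N i s) := by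
      funext i; exact hw i
    rw [h1, Matrix.det_updateCol_add]
    have h2 : (R.updateCol s (fun i => if i = s then 0 else N i s)).det = 0 := by
      apply Matrix.det_eq_zero_of_row_eq_zero s
      intro k
      by_cases hk : k = s
      · subst hk; simp [Matrix.updateCol_self]
      · rw [Matrix.updateCol_ne hk]
        simp [hR, Matrix.updateRow_self, Pi.single_eq_of_ne hk]
    rw [h2, add_zero]
  -- step 2 : reindex
  have hmin : min p n = p := min_eq_left hp.le
  have hpq : min p n + 1 + q = n := by omega
  let e : ((Fin (min p n) ⊕ Fin 1) ⊕ Fin q) ≃ Fin n :=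
    (Equiv.sumCongr finSumFinEquiv (Equiv.refl (Fin q))).trans
      (finSumFinEquiv.trans (finCongr hpq))
  have he1 : ∀ i : Fin (min p n), ((e (Sum.inl (Sum.inl i)) : Fin n) : ℕ) = (i : ℕ) := by
    intro i; simp [e]
  have he2 : ∀ i : Fin 1, ((e (Sum.inl (Sum.inr i)) : Fin n) : ℕ) = p := by
    intro i; have : (i : ℕ) = 0 := by omega
    simp [e, this, hmin]
  have he3 : ∀ k : Fin q, ((e (Sum.inr k) : Fin n) : ℕ) = p + 1 + (k : ℕ) := by
    intro k; simp [e, hmin]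
  have hent : ∀ i k : Fin n, N'' i k =
      if k = s then (if i = s then 1 else 0) else (if i = s then 0 else N i k) := by
    intro i k
    by_cases hk : k = s
    · subst hk
      rw [hN'', Matrix.updateCol_self]
      by_cases hi : i = k
      · rw [hi, Pi.single_eq_same]; simp
      · simp [hi, Pi.single_eq_of_ne hi]
    · rw [hN'', Matrix.updateCol_ne hk]
      by_cases hi : i = s
      · subst hi
        rw [hR, Matrix.updateRow_self]
        simp [hk, Pi.single_eq_of_ne hk]
      · rw [hR, Matrix.updateRow_ne hi]
        simp [hk, hi]
  let A : Matrix (Fin (min p n)) (Fin (min p n)) ℂ :=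
    N.submatrix (fun i => Fin.castLE (min_le_right p n) i)
      (fun i => Fin.castLE (min_le_right p n) i)
  let D : Matrix (Fin (n - 1 - p)) (Fin (n - 1 - p)) ℂ :=
    N.submatrix (fun i : Fin (n - 1 - p) => (⟨p + 1 + i.1, by have := i.2; omega⟩ : Fin n))
      (fun i : Fin (n - 1 - p) => (⟨p + 1 + i.1, by have := i.2; omega⟩ : Fin n))
  have hblock : N''.submatrix (fun x => e x) (fun x => e x) =
      Matrix.fromBlocks (Matrix.fromBlocks A 0 0 (1 : Matrix (Fin 1) (Fin 1) ℂ)) 0 0 D := by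
    ext x y
    let val : (Fin (min p n) ⊕ Fin 1) ⊕ Fin q → ℕ :=
      Sum.elim (Sum.elim (fun i => (i : ℕ)) (fun _ => p)) (fun k => p + 1 + (k : ℕ))
    have hval : ∀ x : (Fin (min p n) ⊕ Fin 1) ⊕ Fin q, ((e x : Fin n) : ℕ) = val x := by
      rintro ((i|i)|k)
      · exact he1 i
      · exact he2 i
      · exact he3 k
    have hne : ∀ x, (val x ≠ p) → (e x : Fin n) ≠ s := by
      intro x hx h
      apply hx
      rw [← hval x, h]
    have heq : ∀ x, (val x = p) → (e x : Fin n) = s := by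
      intro x hx
      apply Fin.ext
      rw [hval x, hx]
    rcases x with (i|i)|i <;> rcases y with (k|k)|k <;>
      simp only [Matrix.submatrix_apply, Matrix.fromBlocks_apply₁₁, Matrix.fromBlocks_apply₁₂,
        Matrix.fromBlocks_apply₂₁, Matrix.fromBlocks_apply₂₂, hent]
    · -- A block
      rw [if_neg (hne _ (by have := k.2; simp [val]; omega)), if_neg (hne _ (by have := i.2; simp [val]; omega))]
      simp only [A, Matrix.submatrix_apply]
      congr 1 <;> exact Fin.ext (by simp [he1])
    · rw [if_pos (heq _ (by simp [val])), if_neg (hne _ (by have := i.2; simp [val]; omega))]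
      simp
    · rw [if_neg (hne _ (by simp [val]; omega))]
      rw [if_neg (hne _ (by have := i.2; simp [val]; omega))]
      have h1 : ((e (Sum.inl (Sum.inl i)) : Fin n) : ℕ) < p := by rw [he1]; have := i.2; omega
      have h2 : p < ((e (Sum.inr k) : Fin n) : ℕ) := by rw [he3]; omega
      simp [(hz _ _ h1 h2).1]
    · rw [if_neg (hne _ (by have := k.2; simp [val]; omega)), if_pos (heq _ (by simp [val]))]
      simp
    · rw [if_pos (heq _ (by simp [val])), if_pos (heq _ (by simp [val]))]
      have : i = k := Subsingleton.elim i k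
      simp [this, Matrix.one_apply]
    · rw [if_neg (hne _ (by simp [val]; omega)), if_pos (heq _ (by simp [val]))]
      simp
    · rw [if_neg (hne _ (by have := k.2; simp [val]; omega)), if_neg (hne _ (by simp [val]; omega))]
      have h1 : ((e (Sum.inl (Sum.inl k)) : Fin n) : ℕ) < p := by rw [he1]; have := k.2; omega
      have h2 : p < ((e (Sum.inr i) : Fin n) : ℕ) := by rw [he3]; omega
      simp [(hz _ _ h1 h2).2]
    · rw [if_pos (heq _ (by simp [val])), if_neg (hne _ (by simp [val]; omega))]
      simp
    · rw [if_neg (hne _ (by simp [val]; omega)), if_neg (hne _ (by simp [val]; omega))]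
      simp only [D, Matrix.submatrix_apply]
      congr 1 <;> exact Fin.ext (by simp [he3])
  have hdet : (N''.submatrix (fun x => e x) (fun x => e x)).det = N''.det :=
    Matrix.det_submatrix_equiv_self e N''
  rw [hstep1, ← hdet, hblock, Matrix.det_fromBlocks_zero₂₁, Matrix.det_fromBlocks_zero₂₁,
    Matrix.det_one, mul_one]
  rfl

lemma det_lin {n : ℕ} (N0 : Matrix (Fin n) (Fin n) ℂ) (s : Fin n) (c : ℂ) :
    (Matrix.of fun i k => N0 i k + if i = s ∧ k = s then c else 0).det
      = N0.det + c * (N0.updateRow s (Pi.single s 1)).det := by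
  classical
  have h : (Matrix.of fun i k => N0 i k + if i = s ∧ k = s then c else 0)
      = N0.updateRow s (N0 s + c • (Pi.single s 1 : Fin n → ℂ)) := by
    ext i k
    simp only [Matrix.of_apply, Matrix.updateRow_apply, Pi.add_apply, Pi.smul_apply,
      Pi.single_apply, smul_eq_mul]
    by_cases hi : i = s
    · subst hi
      by_cases hk : k = i <;> simp [hk]
    · simp [hi]
  rw [h, Matrix.det_updateRow_add, Matrix.updateRow_eq_self, Matrix.det_updateRow_smul]


/-- In the isthmus setting (no genericity needed):
`∂D/∂z_j(z,λ) = E_j·(1 − z_j⁻²)·P_{f(j)}(z,λ)·Q_{f(j)}(z,λ)`. -/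
theorem stmt_11 (a b m d : ℕ) (hm : 1 ≤ m) (hd : 1 ≤ d)
    (M : Matrix (Fin (a + m + b)) (Fin (a + m + b)) ℝ)
    (hMs : M.IsSymm)
    (hM0 : ∀ i j : Fin (a + m + b), (i : ℕ) < (j : ℕ) →
      ¬((j : ℕ) + 1 ≤ a) → ¬(a + m ≤ (i : ℕ)) →
      ¬((j : ℕ) = (i : ℕ) + 1 ∧ a ≤ (i : ℕ) + 1 ∧ (i : ℕ) ≤ a + m - 1) →
      M i j = 0)
    (f : Fin d → Fin (a + m + b))
    (hf : ∀ j, a ≤ (f j : ℕ) ∧ (f j : ℕ) ≤ a + m - 1)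
    (E : Fin d → ℝ) :
    ∀ (z : Fin d → ℂ), (∀ j, z j ≠ 0) → ∀ (lam : ℂ) (j : Fin d),
      isthPD a m b d M f E j z lam
        = (E j : ℂ) * (1 - ((z j)⁻¹) ^ 2)
            * isthP a m b d M f E (f j : ℕ) z lam
            * isthQ a m b d M f E (f j : ℕ) z lam := by
  classical
  intro z hz0 lam j
  set N0 : Matrix (Fin (a + m + b)) (Fin (a + m + b)) ℂ :=
    isthH a m b d M f (Function.update E j 0) z - lam • 1 with hN0
  set N1 : Matrix (Fin (a + m + b)) (Fin (a + m + b)) ℂ :=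
    isthH a m b d M f E z - lam • 1 with hN1
  have hsum : ∀ (i : Fin (a + m + b)) (t : ℂ),
      (∑ j', if f j' = i then (E j' : ℂ) *
        (Function.update z j t j' + (Function.update z j t j')⁻¹) else 0)
      = (∑ j', if f j' = i then ((Function.update E j 0 j' : ℝ) : ℂ) * (z j' + (z j')⁻¹) else 0)
        + (if f j = i then (E j : ℂ) * (t + t⁻¹) else 0) := by
    intro i t
    rw [← Finset.add_sum_erase _ _ (Finset.mem_univ j),
        ← Finset.add_sum_erase _ _ (Finset.mem_univ j)]
    have h1 : ∑ j' ∈ Finset.univ.erase j, (if f j' = i then (E j' : ℂ) *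
        (Function.update z j t j' + (Function.update z j t j')⁻¹) else 0)
        = ∑ j' ∈ Finset.univ.erase j,
          (if f j' = i then ((Function.update E j 0 j' : ℝ) : ℂ) * (z j' + (z j')⁻¹) else 0) := by
      refine Finset.sum_congr rfl fun j' hj' => ?_
      have hne : j' ≠ j := (Finset.mem_erase.mp hj').1
      rw [Function.update_of_ne hne, Function.update_of_ne hne]
    rw [h1, Function.update_self, Function.update_self]
    push_cast
    by_cases hfj : f j = i <;> simp [hfj] <;> ring
  -- matrix decomposition
  have hNt : ∀ t : ℂ, isthH a m b d M f E (Function.update z j t) - lam • 1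
      = Matrix.of (fun i k => N0 i k +
          if i = f j ∧ k = f j then (E j : ℂ) * (t + t⁻¹) else 0) := by
    intro t
    ext i k
    simp only [hN0, Matrix.sub_apply, isthH, Matrix.of_apply]
    rw [hsum i t]
    by_cases hik : i = k
    · by_cases hfj : f j = i
      · have h2 : i = f j ∧ k = f j := ⟨hfj.symm, by rw [← hik, hfj]⟩
        rw [if_pos hik, if_pos hik, if_pos h2, if_pos hfj]
        ring
      · have h2 : ¬(i = f j ∧ k = f j) := fun h => hfj h.1.symm
        rw [if_pos hik, if_pos hik, if_neg h2, if_neg hfj]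
        ring
    · have h2 : ¬(i = f j ∧ k = f j) := fun h => hik (h.1.trans h.2.symm)
      rw [if_neg hik, if_neg hik, if_neg h2]
      ring
  have key : ∀ t : ℂ, isthD a m b d M f E (Function.update z j t) lam
      = N0.det + (E j : ℂ) * (t + t⁻¹) *
          ((Matrix.updateRow N0 (f j) (Pi.single (f j) 1)).det) := by
    intro t
    rw [isthD, hNt t, det_lin]
  have hsw : Matrix.updateRow N0 (f j) (Pi.single (f j) 1)
      = Matrix.updateRow N1 (f j) (Pi.single (f j) 1) := by
    ext i k
    by_cases hi : i = f j
    · subst hi; rw [Matrix.updateRow_self, Matrix.updateRow_self]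
    · rw [Matrix.updateRow_ne hi, Matrix.updateRow_ne hi]
      simp only [hN0, hN1, Matrix.sub_apply, isthH, Matrix.of_apply]
      congr 2
      by_cases hik : i = k
      · simp only [if_pos hik]
        refine Finset.sum_congr rfl fun j' _ => ?_
        by_cases hfj' : f j' = i
        · rw [if_pos hfj', if_pos hfj']
          have hne : j' ≠ j := fun h => hi (by rw [← hfj', h])
          rw [Function.update_of_ne hne]
        · rw [if_neg hfj', if_neg hfj']
      · simp [hik]
  have hzstruct : ∀ i k : Fin (a + m + b),
      (i : ℕ) < ((f j) : ℕ) → ((f j) : ℕ) < (k : ℕ) → N1 i k = 0 ∧ N1 k i = 0 := by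
    intro i k h1 h2
    have hfs := hf j
    have hik : (i : ℕ) < (k : ℕ) := lt_trans h1 h2
    have hM1 : M i k = 0 := by
      apply hM0 i k hik
      · omega
      · omega
      · rintro ⟨hk, _, _⟩; omega
    have hM2 : M k i = 0 := by
      have h := congrFun (congrFun hMs i) k
      rw [Matrix.transpose_apply] at h
      rw [h]; exact hM1
    have hikne : i ≠ k := fun h => by rw [h] at hik; omega
    have hkine : k ≠ i := fun h => by rw [h] at hik; omega
    constructor
    · simp [hN1, isthH, Matrix.sub_apply, Matrix.one_apply, hikne, hM1]
    · simp [hN1, isthH, Matrix.sub_apply, Matrix.one_apply, hkine, hM2]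
  have hcof : (Matrix.updateRow N0 (f j) (Pi.single (f j) 1)).det
      = isthP a m b d M f E ((f j : ℕ)) z lam * isthQ a m b d M f E ((f j : ℕ)) z lam := by
    rw [hsw, det_pivot N1 (f j) hzstruct]
    rfl
  have hfun : (fun t => isthD a m b d M f E (Function.update z j t) lam)
      = fun t => N0.det + (E j : ℂ) * (t + t⁻¹) *
          (isthP a m b d M f E ((f j : ℕ)) z lam * isthQ a m b d M f E ((f j : ℕ)) z lam) := by
    funext t; rw [key t, hcof]
  rw [isthPD, hfun]
  have hder : HasDerivAt (fun t : ℂ => t + t⁻¹) (1 - ((z j)⁻¹) ^ 2) (z j) := by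
    have h := (hasDerivAt_id' (z j)).add (hasDerivAt_inv (hz0 j))
    have e : (1 : ℂ) - ((z j)⁻¹) ^ 2 = 1 + -(z j ^ 2)⁻¹ := by
      rw [inv_pow]
      ring
    rw [e]; exact h
  have hder2 : HasDerivAt (fun t : ℂ => N0.det + (E j : ℂ) * (t + t⁻¹) *
      (isthP a m b d M f E ((f j : ℕ)) z lam * isthQ a m b d M f E ((f j : ℕ)) z lam))
      ((E j : ℂ) * (1 - ((z j)⁻¹) ^ 2) *
        (isthP a m b d M f E ((f j : ℕ)) z lam * isthQ a m b d M f E ((f j : ℕ)) z lam)) (z j) :=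
    (((hder.const_mul ((E j : ℂ))).mul_const _).const_add _)
  rw [hder2.deriv]
  ring
end

section
/- Let D : (ℂ∖{0})^d × ℂ → ℂ be holomorphic, a ∈ ℂ with a ≠ 0, and let D_a(z,w,μ) = D(z, μ − a·(w + w⁻¹)) be the parallel extension. Suppose (x,λ₀) is a critical point of D with ∂D/∂λ(x,λ₀) ≠ 0. Then for w₀ ∈ ℂ∖{0}, the point (x, w₀, λ₀ + a·(w₀ + w₀⁻¹)) is a critical point of D_a if and only if w₀ ∈ {1, −1}; that is, the critical points of D_a lying in the fiber over (x,λ₀) are exactly (x, 1, λ₀ + 2a) and (x, −1, λ₀ − 2a). -/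
/-- The partial derivative `∂D/∂z_i` of a function `D` on `(ℂ∖{0})^d × ℂ`. -/
noncomputable def pz (d : ℕ) (D : (Fin d → ℂ) → ℂ → ℂ) (i : Fin d)
    (z : Fin d → ℂ) (lam : ℂ) : ℂ :=
  deriv (fun t => D (Function.update z i t) lam) (z i)

/-- The partial derivative `∂D/∂λ` of a function `D` on `(ℂ∖{0})^d × ℂ`. -/
noncomputable def pl (d : ℕ) (D : (Fin d → ℂ) → ℂ → ℂ) (z : Fin d → ℂ) (lam : ℂ) : ℂ :=
  deriv (fun t => D z t) lam

/-- The parallel extension `D_a(z,w,μ) = D(z, μ − a·(w + w⁻¹))`. -/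
noncomputable def Dpar (d : ℕ) (D : (Fin d → ℂ) → ℂ → ℂ) (a : ℂ)
    (z : Fin d → ℂ) (w : ℂ) (mu : ℂ) : ℂ :=
  D z (mu - a * (w + w⁻¹))

/-- `D` is holomorphic on `(ℂ∖{0})^d × ℂ`. -/
def IsHolo (d : ℕ) (D : (Fin d → ℂ) → ℂ → ℂ) : Prop :=
  ∀ (z : Fin d → ℂ) (lam : ℂ), (∀ i, z i ≠ 0) →
    DifferentiableAt ℂ (fun p : (Fin d → ℂ) × ℂ => D p.1 p.2) (z, lam)

/-- Let `(x,λ₀)` be a critical point of `D` with `∂D/∂λ(x,λ₀) ≠ 0` and `a ≠ 0`.  Then the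
critical points of the parallel extension `D_a` in the fiber over `(x,λ₀)` are exactly
`(x, ±1, λ₀ ± 2a)`: the fiber point over `w₀` is critical iff `w₀ = 1` or `w₀ = −1`. -/
theorem stmt_15 (d : ℕ) (hd : 1 ≤ d) (D : (Fin d → ℂ) → ℂ → ℂ) (hD : IsHolo d D)
    (a : ℂ) (ha : a ≠ 0)
    (x : Fin d → ℂ) (lam0 : ℂ) (hx : ∀ i, x i ≠ 0)
    -- (x, λ₀) is a critical point of D
    (hval : D x lam0 = 0) (hz : ∀ i, pz d D i x lam0 = 0)
    -- nondegeneracy in the λ-direction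
    (hnd : pl d D x lam0 ≠ 0) :
    ∀ w0 : ℂ, w0 ≠ 0 →
      ((Dpar d D a x w0 (lam0 + a * (w0 + w0⁻¹)) = 0 ∧
        (∀ i, deriv (fun t => Dpar d D a (Function.update x i t) w0
          (lam0 + a * (w0 + w0⁻¹))) (x i) = 0) ∧
        deriv (fun t => Dpar d D a x t (lam0 + a * (w0 + w0⁻¹))) w0 = 0)
       ↔ (w0 = 1 ∨ w0 = -1)) := by

  intro w0 hw0
  have hmu : lam0 + a * (w0 + w0⁻¹) - a * (w0 + w0⁻¹) = lam0 := by ring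
  have hDiff : DifferentiableAt ℂ (fun t => D x t) lam0 := by
    have h := hD x lam0 hx
    have hpair : DifferentiableAt ℂ (fun t : ℂ => ((x : Fin d → ℂ), t)) lam0 :=
      DifferentiableAt.prodMk (differentiableAt_const _) differentiableAt_id
    exact h.comp lam0 hpair
  have hDl : HasDerivAt (fun t => D x t) (pl d D x lam0) lam0 := hDiff.hasDerivAt
  have hg : HasDerivAt (fun t : ℂ => lam0 + a * (w0 + w0⁻¹) - a * (t + t⁻¹))
      (-(a * (1 + -(w0 ^ 2)⁻¹))) w0 :=
    (((hasDerivAt_id w0).add (hasDerivAt_inv hw0)).const_mul a).const_sub _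
  have hDl' : HasDerivAt (fun t => D x t) (pl d D x lam0)
      (lam0 + a * (w0 + w0⁻¹) - a * (w0 + w0⁻¹)) := by rw [hmu]; exact hDl
  have hcomp := hDl'.comp w0 hg
  have key : deriv (fun t => Dpar d D a x t (lam0 + a * (w0 + w0⁻¹))) w0
      = pl d D x lam0 * -(a * (1 + -(w0 ^ 2)⁻¹)) := hcomp.deriv
  constructor
  · rintro ⟨-, -, h3⟩
    rw [key] at h3
    rcases mul_eq_zero.mp h3 with h | h
    · exact absurd h hnd
    · have h4 : 1 + -(w0 ^ 2)⁻¹ = 0 := by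
        rcases mul_eq_zero.mp (neg_eq_zero.mp h) with h' | h'
        · exact absurd h' ha
        · exact h'
      have h5 : w0 ^ 2 = 1 := by
        have hinv : (w0 ^ 2)⁻¹ = 1 := by linear_combination -h4
        exact inv_eq_one.mp hinv
      have h6 : (w0 - 1) * (w0 + 1) = 0 := by linear_combination h5
      rcases mul_eq_zero.mp h6 with h' | h'
      · exact Or.inl (sub_eq_zero.mp h')
      · exact Or.inr (eq_neg_of_add_eq_zero_left h')
  · intro h
    have hsq : w0 ^ 2 = 1 := by rcases h with rfl | rfl <;> ring
    refine ⟨?_, ?_, ?_⟩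
    · show D x (lam0 + a * (w0 + w0⁻¹) - a * (w0 + w0⁻¹)) = 0
      rw [hmu]; exact hval
    · intro i
      have : (fun t => Dpar d D a (Function.update x i t) w0 (lam0 + a * (w0 + w0⁻¹)))
          = fun t => D (Function.update x i t) lam0 := by
        funext t; show D _ (lam0 + a * (w0 + w0⁻¹) - a * (w0 + w0⁻¹)) = _; rw [hmu]
      rw [this]; exact hz i
    · rw [key, hsq]; simp
end

section
/- Let d ≥ 1 and m ≥ 1 be integers, V : {1,…,m} → ℝ an injective function, and A a continuous map from the torus 𝕋^d = {z ∈ ℂ : |z| = 1}^d to the m×m complex matrices such that A(z) is Hermitian for every z ∈ 𝕋^d. For t ∈ ℝ let H_t(z) = diag(V) + t·A(z) (a Hermitian matrix), and for k = 1,…,m let band_k(t) = { λ_k(H_t(z)) : z ∈ 𝕋^d } ⊆ ℝ, where λ_1(·) ≤ ⋯ ≤ λ_m(·) denote the eigenvalues of a Hermitian matrix listed in increasing order. Then there exists ε > 0 such that for every t with 0 < t < ε, the sets band_1(t), …, band_m(t) are pairwise disjoint. -/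
namespace SpecHelper

open Matrix Complex Polynomial

variable {m : ℕ}

/-- real quadratic-form value -/
noncomputable def qf (M : Matrix (Fin m) (Fin m) ℂ) (v : Fin m → ℂ) : ℝ :=
  Complex.re (star v ⬝ᵥ (M *ᵥ v))

noncomputable def nsq (v : Fin m → ℂ) : ℝ := ∑ j, Complex.normSq (v j)

lemma re_star_dot (v : Fin m → ℂ) : Complex.re (star v ⬝ᵥ v) = nsq v := by
  simp [dotProduct, nsq, Complex.normSq_apply]

lemma nsq_nonneg (v : Fin m → ℂ) : 0 ≤ nsq v :=
  Finset.sum_nonneg fun _ _ => Complex.normSq_nonneg _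

lemma nsq_pos_of_ne_zero {v : Fin m → ℂ} (hv : v ≠ 0) : 0 < nsq v := by
  rcases Function.ne_iff.mp hv with ⟨i, hi⟩
  have : 0 < Complex.normSq (v i) := by
    simpa [Complex.normSq_pos] using hi
  exact lt_of_lt_of_le this
    (Finset.single_le_sum (fun _ _ => Complex.normSq_nonneg _) (Finset.mem_univ i))

variable {A : Matrix (Fin m) (Fin m) ℂ} (hA : A.IsHermitian)

noncomputable def Ucol (j : Fin m) : Fin m → ℂ := ⇑(hA.eigenvectorBasis j)

noncomputable def coords (v : Fin m → ℂ) : Fin m → ℂ :=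
  star (hA.eigenvectorUnitary : Matrix (Fin m) (Fin m) ℂ) *ᵥ v

lemma coords_Ucol (j : Fin m) : coords hA (Ucol hA j) = Pi.single j 1 :=
  hA.star_eigenvectorUnitary_mulVec j

lemma star_coords (v : Fin m → ℂ) :
    star (coords hA v) = star v ᵥ* (hA.eigenvectorUnitary : Matrix (Fin m) (Fin m) ℂ) := by
  rw [coords, star_mulVec, Matrix.star_eq_conjTranspose, Matrix.conjTranspose_conjTranspose]

lemma dot_coords (v w : Fin m → ℂ) (M : Matrix (Fin m) (Fin m) ℂ) :
    star (coords hA v) ⬝ᵥ (M *ᵥ coords hA w)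
      = star v ⬝ᵥ (((hA.eigenvectorUnitary : Matrix (Fin m) (Fin m) ℂ) * M *
          star (hA.eigenvectorUnitary : Matrix (Fin m) (Fin m) ℂ)) *ᵥ w) := by
  rw [star_coords, coords, Matrix.mulVec_mulVec, ← Matrix.dotProduct_mulVec,
    Matrix.mulVec_mulVec, ← Matrix.mul_assoc]

lemma qf_eq (v : Fin m → ℂ) :
    qf A v = ∑ j, hA.eigenvalues j * Complex.normSq (coords hA v j) := by
  have h1 : star (coords hA v) ⬝ᵥ ((Matrix.diagonal (RCLike.ofReal ∘ hA.eigenvalues)) *ᵥ coords hA v)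
      = star v ⬝ᵥ (A *ᵥ v) := by
    rw [dot_coords]
    congr 1
    conv_rhs => rw [hA.spectral_theorem]
    rw [Unitary.conjStarAlgAut_apply]
  rw [qf, ← h1]
  simp only [dotProduct, Matrix.mulVec_diagonal, Complex.re_sum]
  refine Finset.sum_congr rfl fun j _ => ?_
  simp only [Pi.star_apply, RCLike.star_def, Function.comp_apply]
  have h2 : (starRingEnd ℂ) (coords hA v j) * ((RCLike.ofReal (hA.eigenvalues j) : ℂ) * coords hA v j)
      = (hA.eigenvalues j : ℂ) * ((coords hA v j) * (starRingEnd ℂ) (coords hA v j)) := by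
    simp only [RCLike.ofReal_alg, Complex.real_smul, mul_one]; ring
  rw [h2, Complex.mul_conj]
  simp

lemma nsq_coords (v : Fin m → ℂ) : nsq (coords hA v) = nsq v := by
  have h1 : star (coords hA v) ⬝ᵥ ((1 : Matrix (Fin m) (Fin m) ℂ) *ᵥ coords hA v)
      = star v ⬝ᵥ (((hA.eigenvectorUnitary : Matrix (Fin m) (Fin m) ℂ) * 1 *
          star (hA.eigenvectorUnitary : Matrix (Fin m) (Fin m) ℂ)) *ᵥ v) := dot_coords hA v v 1
  rw [mul_one, (Matrix.mem_unitaryGroup_iff).mp (hA.eigenvectorUnitary).2] at h1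
  simp only [Matrix.one_mulVec] at h1
  rw [← re_star_dot, ← re_star_dot, h1]

/-- `coords` as linear map -/
noncomputable def coordsL : (Fin m → ℂ) →ₗ[ℂ] (Fin m → ℂ) :=
  Matrix.mulVecLin (star (hA.eigenvectorUnitary : Matrix (Fin m) (Fin m) ℂ))

lemma coordsL_apply (v : Fin m → ℂ) : coordsL hA v = coords hA v := rfl

lemma linearIndependent_Ucol : LinearIndependent ℂ (Ucol hA) := by
  rw [Fintype.linearIndependent_iff]
  intro g hg j
  have := congrArg (coordsL hA) hg
  rw [map_sum] at this
  simp only [_root_.map_smul, coordsL_apply, coords_Ucol, map_zero] at this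
  have := congrFun this j
  simpa [Finset.sum_apply, Pi.single_apply] using this

lemma coords_eq_zero_of_mem_span {S : Finset (Fin m)} {v : Fin m → ℂ}
    (hv : v ∈ Submodule.span ℂ (Set.range (fun j : S => Ucol hA j))) :
    ∀ j ∉ S, coords hA v j = 0 := by
  intro j hj
  have h : Submodule.span ℂ (Set.range (fun i : S => Ucol hA i)) ≤
      LinearMap.ker ((LinearMap.proj j).comp (coordsL hA)) := by
    rw [Submodule.span_le]
    rintro _ ⟨i, rfl⟩
    simp only [SetLike.mem_coe, LinearMap.mem_ker, LinearMap.comp_apply, coordsL_apply,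
      coords_Ucol, LinearMap.proj_apply]
    exact Pi.single_eq_of_ne (fun h : j = i.1 => hj (by rw [h]; exact i.2)) 1
  have := h hv
  simpa [coordsL_apply] using this

lemma finrank_span_Ucol (S : Finset (Fin m)) :
    Module.finrank ℂ (Submodule.span ℂ (Set.range (fun j : S => Ucol hA j))) = S.card := by
  have : (fun j : S => Ucol hA j) = (Ucol hA) ∘ (Subtype.val : S → Fin m) := rfl
  rw [this, finrank_span_eq_card ((linearIndependent_Ucol hA).comp _ Subtype.val_injective)]
  simp

lemma exists_ne_zero_mem_inf {U W : Submodule ℂ (Fin m → ℂ)}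
    (h : m < Module.finrank ℂ U + Module.finrank ℂ W) : ∃ v ≠ 0, v ∈ U ⊓ W := by
  have h1 := Submodule.finrank_sup_add_finrank_inf_eq U W
  have h2 : Module.finrank ℂ ↥(U ⊔ W) ≤ m := by
    have := Submodule.finrank_le (U ⊔ W)
    rwa [Module.finrank_fin_fun] at this
  have hpos : 0 < Module.finrank ℂ ↥(U ⊓ W) := by omega
  rw [Module.finrank_pos_iff] at hpos
  obtain ⟨x, hx⟩ := exists_ne (0 : ↥(U ⊓ W))
  exact ⟨x.1, by simpa [Submodule.coe_eq_zero] using hx, x.2⟩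

lemma sum_eig_normSq_le {S : Finset (Fin m)} {v : Fin m → ℂ} {c : ℝ}
    (hc0 : ∀ j ∉ S, coords hA v j = 0)
    (hbd : ∀ j ∈ S, hA.eigenvalues j ≤ c) :
    qf A v ≤ c * nsq v := by
  rw [qf_eq hA v, ← nsq_coords hA v]
  unfold nsq
  rw [← Finset.sum_subset (S.subset_univ) (fun j _ hj => by rw [hc0 j hj]; simp),
    ← Finset.sum_subset (S.subset_univ) (fun j _ hj => by rw [hc0 j hj]; simp),
    Finset.mul_sum]
  exact Finset.sum_le_sum fun j hj =>
    mul_le_mul_of_nonneg_right (hbd j hj) (Complex.normSq_nonneg _)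

lemma le_sum_eig_normSq {S : Finset (Fin m)} {v : Fin m → ℂ} {c : ℝ}
    (hc0 : ∀ j ∉ S, coords hA v j = 0)
    (hbd : ∀ j ∈ S, c ≤ hA.eigenvalues j) :
    c * nsq v ≤ qf A v := by
  rw [qf_eq hA v, ← nsq_coords hA v]
  unfold nsq
  rw [← Finset.sum_subset (S.subset_univ) (fun j _ hj => by rw [hc0 j hj]; simp),
    ← Finset.sum_subset (S.subset_univ) (fun j _ hj => by rw [hc0 j hj]; simp),
    Finset.mul_sum]
  exact Finset.sum_le_sum fun j hj =>
    mul_le_mul_of_nonneg_right (hbd j hj) (Complex.normSq_nonneg _)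

/-- One-sided Weyl inequality for sorted eigenvalues. -/
lemma weyl_le {B P : Matrix (Fin m) (Fin m) ℂ} (hB : B.IsHermitian) (hP : P.IsHermitian)
    {C : ℝ} (hC : ∀ v : Fin m → ℂ, |qf (P - B) v| ≤ C * nsq v) (k : Fin m) :
    hB.eigenvalues (Tuple.sort hB.eigenvalues k)
      ≤ hP.eigenvalues (Tuple.sort hP.eigenvalues k) + C := by
  set q := Tuple.sort hP.eigenvalues with hq
  set p := Tuple.sort hB.eigenvalues with hp
  set SU : Finset (Fin m) := (Finset.Iic k).image q with hSU
  set SW : Finset (Fin m) := (Finset.Ici k).image p with hSW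
  obtain ⟨v, hv0, hvUW⟩ := exists_ne_zero_mem_inf
    (U := Submodule.span ℂ (Set.range (fun j : SU => Ucol hP j)))
    (W := Submodule.span ℂ (Set.range (fun j : SW => Ucol hB j)))
    (by
      rw [finrank_span_Ucol hP, finrank_span_Ucol hB, hSU, hSW,
        Finset.card_image_of_injective _ q.injective,
        Finset.card_image_of_injective _ p.injective, Fin.card_Iic, Fin.card_Ici]
      have := k.2
      omega)
  obtain ⟨hvU, hvW⟩ := Submodule.mem_inf.mp hvUW
  have h1 : qf P v ≤ hP.eigenvalues (q k) * nsq v := by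
    refine sum_eig_normSq_le hP (coords_eq_zero_of_mem_span hP hvU) ?_
    intro j hj
    obtain ⟨i, hi, rfl⟩ := Finset.mem_image.mp hj
    exact Tuple.monotone_sort hP.eigenvalues (Finset.mem_Iic.mp hi)
  have h2 : hB.eigenvalues (p k) * nsq v ≤ qf B v := by
    refine le_sum_eig_normSq hB (coords_eq_zero_of_mem_span hB hvW) ?_
    intro j hj
    obtain ⟨i, hi, rfl⟩ := Finset.mem_image.mp hj
    exact Tuple.monotone_sort hB.eigenvalues (Finset.mem_Ici.mp hi)
  have h3 : qf B v + qf (P - B) v = qf P v := by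
    unfold qf
    rw [← Complex.add_re, ← dotProduct_add, ← Matrix.add_mulVec,
      show B + (P - B) = P from by abel]
  have h4 := (abs_le.mp (hC v)).1
  have h5 : 0 < nsq v := nsq_pos_of_ne_zero hv0
  have h6 : hB.eigenvalues (p k) * nsq v ≤ (hP.eigenvalues (q k) + C) * nsq v := by nlinarith
  exact (mul_le_mul_iff_of_pos_right h5).mp h6

lemma charpoly_unitary_conj (U M : Matrix (Fin m) (Fin m) ℂ)
    (h1 : U * star U = 1) (h2 : star U * U = 1) :
    (U * M * star U).charpoly = M.charpoly := by
  have key : charmatrix (U * M * star U)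
      = (U.map C) * charmatrix M * ((star U).map C) := by
    unfold charmatrix
    rw [mul_sub, sub_mul]
    congr 1
    · rw [scalar_apply]
      have : U.map C * diagonal (fun _ => (X : ℂ[X])) = diagonal (fun _ => (X : ℂ[X])) * U.map C :=
        ((scalar_commute (X : ℂ[X]) (fun r' => Commute.all _ _) (U.map C)).symm).symm ▸ by
          simpa [scalar_apply] using
            (scalar_commute (X : ℂ[X]) (fun r' => Commute.all _ _) (U.map C)).symm.eq
      rw [this, Matrix.mul_assoc, ← Matrix.map_mul, h1]
      simp [scalar_apply, Matrix.map_one]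
    · simp only [RingHom.mapMatrix_apply]
      rw [← Matrix.map_mul, ← Matrix.map_mul]
  have hdet : ((star U).map ⇑(C : ℂ →+* ℂ[X])).det * (U.map ⇑(C : ℂ →+* ℂ[X])).det = 1 := by
    rw [← Matrix.det_mul, ← Matrix.map_mul, h2]
    simp [Matrix.map_one]
  unfold Matrix.charpoly
  rw [key, Matrix.det_mul, Matrix.det_mul, mul_comm, ← mul_assoc, hdet, one_mul]

lemma charpoly_diagonal (f : Fin m → ℂ) :
    (Matrix.diagonal f).charpoly = ∏ i, (X - C (f i)) := by
  have : charmatrix (Matrix.diagonal f) = Matrix.diagonal (fun i => X - C (f i)) := by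
    ext i j
    by_cases h : i = j
    · subst h; simp [charmatrix_apply]
    · simp [charmatrix_apply, Matrix.diagonal_apply_ne _ h]
  rw [Matrix.charpoly, this, Matrix.det_diagonal]

lemma multiset_ofFn (f : Fin m → ℝ) :
    (↑(List.ofFn f) : Multiset ℝ) = Multiset.map f Finset.univ.val := by
  rw [List.ofFn_eq_map, Fin.univ_def]
  rfl

lemma sorted_eq_of_multiset_eq {f g : Fin m → ℝ}
    (h : Multiset.map f Finset.univ.val = Multiset.map g Finset.univ.val) :
    f ∘ Tuple.sort f = g ∘ Tuple.sort g := by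
  have hp : (List.ofFn f).Perm (List.ofFn g) := by
    rw [← Multiset.coe_eq_coe, multiset_ofFn, multiset_ofFn]; exact h
  exact List.ofFn_injective (List.Perm.eq_of_sortedLE
    (Tuple.monotone_sort f).sortedLE_ofFn (Tuple.monotone_sort g).sortedLE_ofFn
    (((Tuple.sort f).ofFn_comp_perm f).trans (hp.trans ((Tuple.sort g).ofFn_comp_perm g).symm)))

lemma eigenvalues_diagonal_multiset (f : Fin m → ℝ)
    (hD : (Matrix.diagonal fun i => (f i : ℂ)).IsHermitian) :
    Multiset.map hD.eigenvalues Finset.univ.val = Multiset.map f Finset.univ.val := by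
  set U : Matrix (Fin m) (Fin m) ℂ := (hD.eigenvectorUnitary : Matrix (Fin m) (Fin m) ℂ) with hU
  have hU1 : U * star U = 1 := (Matrix.mem_unitaryGroup_iff).mp (hD.eigenvectorUnitary).2
  have hU2 : star U * U = 1 := (Matrix.mem_unitaryGroup_iff').mp (hD.eigenvectorUnitary).2
  have hcp : (Matrix.diagonal fun i => (f i : ℂ)).charpoly
      = (Matrix.diagonal (RCLike.ofReal ∘ hD.eigenvalues)).charpoly := by
    conv_lhs => rw [hD.spectral_theorem]
    exact charpoly_unitary_conj _ _ hU1 hU2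
  rw [charpoly_diagonal, charpoly_diagonal] at hcp
  have h2 := congrArg Polynomial.roots hcp
  rw [Finset.prod_eq_multiset_prod, Finset.prod_eq_multiset_prod,
    show (Multiset.map (fun i => X - C ((f i : ℂ))) Finset.univ.val)
        = Multiset.map (fun a => X - C a) (Multiset.map (fun i => ((f i : ℂ))) Finset.univ.val)
      from by rw [Multiset.map_map]; rfl,
    show (Multiset.map (fun i => X - C ((RCLike.ofReal ∘ hD.eigenvalues) i)) Finset.univ.val)
        = Multiset.map (fun a => X - C a)
            (Multiset.map (fun i => ((hD.eigenvalues i : ℂ))) Finset.univ.val)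
      from by rw [Multiset.map_map]; rfl,
    Polynomial.roots_multiset_prod_X_sub_C, Polynomial.roots_multiset_prod_X_sub_C] at h2
  have h3 := congrArg (Multiset.map Complex.re) h2
  rw [Multiset.map_map, Multiset.map_map] at h3
  simpa using h3.symm

lemma abs_prod_le_nsq (v : Fin m → ℂ) (i j : Fin m) :
    ‖v i‖ * ‖v j‖ ≤ nsq v := by
  have h1 : Complex.normSq (v i) ≤ nsq v :=
    Finset.single_le_sum (fun _ _ => Complex.normSq_nonneg _) (Finset.mem_univ i)
  have h2 : Complex.normSq (v j) ≤ nsq v :=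
    Finset.single_le_sum (fun _ _ => Complex.normSq_nonneg _) (Finset.mem_univ j)
  have e1 : Complex.normSq (v i) = (‖v i‖)^2 := (Complex.sq_norm _).symm
  have e2 : Complex.normSq (v j) = (‖v j‖)^2 := (Complex.sq_norm _).symm
  nlinarith [norm_nonneg (v i), norm_nonneg (v j)]

lemma abs_qf_le (M : Matrix (Fin m) (Fin m) ℂ) (v : Fin m → ℂ) :
    |qf M v| ≤ (∑ i, ∑ j, ‖M i j‖) * nsq v := by
  have h0 : |qf M v| ≤ ‖star v ⬝ᵥ (M *ᵥ v)‖ := Complex.abs_re_le_norm _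
  have h1 : star v ⬝ᵥ (M *ᵥ v) = ∑ i, ∑ j, (starRingEnd ℂ) (v i) * (M i j * v j) := by
    simp [dotProduct, Matrix.mulVec, Finset.mul_sum]
  have h2 : ‖star v ⬝ᵥ (M *ᵥ v)‖
      ≤ ∑ i, ∑ j, ‖M i j‖ * (‖v i‖ * ‖v j‖) := by
    rw [h1]
    refine (norm_sum_le _ _).trans (Finset.sum_le_sum fun i _ => ?_)
    refine (norm_sum_le _ _).trans (Finset.sum_le_sum fun j _ => ?_)
    rw [norm_mul, norm_mul, Complex.norm_conj]
    exact le_of_eq (by ring)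
  have h3 : ∑ i, ∑ j, ‖M i j‖ * (‖v i‖ * ‖v j‖)
      ≤ ∑ i, ∑ j, ‖M i j‖ * nsq v := by
    refine Finset.sum_le_sum fun i _ => Finset.sum_le_sum fun j _ =>
      mul_le_mul_of_nonneg_left (abs_prod_le_nsq v i j) (norm_nonneg _)
  calc |qf M v| ≤ ‖star v ⬝ᵥ (M *ᵥ v)‖ := h0
    _ ≤ ∑ i, ∑ j, ‖M i j‖ * (‖v i‖ * ‖v j‖) := h2
    _ ≤ ∑ i, ∑ j, ‖M i j‖ * nsq v := h3
    _ = (∑ i, ∑ j, ‖M i j‖) * nsq v := by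
        rw [Finset.sum_mul]
        exact Finset.sum_congr rfl fun i _ => by rw [Finset.sum_mul]

lemma qf_neg (M : Matrix (Fin m) (Fin m) ℂ) (v : Fin m → ℂ) : qf (-M) v = -qf M v := by
  unfold qf
  rw [Matrix.neg_mulVec, dotProduct_neg, Complex.neg_re]

end SpecHelper

/-- The `k`-th spectral band of the family `H_t(z) = diag(V) + t·A(z)` over the torus:
the set of `k`-th smallest eigenvalues `λ_k(H_t(z))` as `z` ranges over `𝕋^d`, where the
eigenvalues of a Hermitian matrix are listed in increasing order. -/
noncomputable def specBand (d m : ℕ) (V : Fin m → ℝ)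
    (A : (Fin d → ℂ) → Matrix (Fin m) (Fin m) ℂ) (t : ℝ) (k : Fin m) : Set ℝ :=
  {lam | ∃ z : Fin d → ℂ, (∀ i, ‖z i‖ = 1) ∧
    ∃ hH : (Matrix.diagonal (fun i => (V i : ℂ)) + (t : ℂ) • A z).IsHermitian,
      lam = hH.eigenvalues (Tuple.sort hH.eigenvalues k)}

/-- If the potential values `V(1),…,V(m)` are distinct and `A` is a continuous Hermitian
matrix family on the torus `𝕋^d`, then for all sufficiently small `t > 0` the spectral
bands of `H_t = diag(V) + t·A` are pairwise disjoint. -/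
theorem stmt_19 (d m : ℕ) (hd : 1 ≤ d) (hm : 1 ≤ m)
    (V : Fin m → ℝ) (hV : Function.Injective V)
    (A : (Fin d → ℂ) → Matrix (Fin m) (Fin m) ℂ)
    (hAcont : ContinuousOn A {z : Fin d → ℂ | ∀ i, ‖z i‖ = 1})
    (hAherm : ∀ z : Fin d → ℂ, (∀ i, ‖z i‖ = 1) → (A z).IsHermitian) :
    ∃ ε : ℝ, 0 < ε ∧ ∀ t : ℝ, 0 < t → t < ε →
      ∀ k k' : Fin m, k ≠ k' → Disjoint (specBand d m V A t k) (specBand d m V A t k') := by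
  classical
  have hD : (Matrix.diagonal (fun i => (V i : ℂ))).IsHermitian :=
    Matrix.isHermitian_diagonal_iff.mpr fun i => by
      simpa [IsSelfAdjoint] using Complex.conj_ofReal (V i)
  have hDs : hD.eigenvalues ∘ Tuple.sort hD.eigenvalues = V ∘ Tuple.sort V :=
    SpecHelper.sorted_eq_of_multiset_eq (SpecHelper.eigenvalues_diagonal_multiset V hD)
  set sV : Fin m → ℝ := V ∘ Tuple.sort V with hsV
  -- compact bound on A over the torus
  set K : Set (Fin d → ℂ) := {z | ∀ i, ‖z i‖ = 1} with hK
  have hKeq : K = Set.pi Set.univ (fun _ : Fin d => Metric.sphere (0:ℂ) 1) := by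
    ext z
    constructor
    · intro h i _
      simpa [mem_sphere_zero_iff_norm] using h i
    · intro h i
      simpa [mem_sphere_zero_iff_norm] using h i (Set.mem_univ i)
  have hKc : IsCompact K := hKeq ▸ isCompact_univ_pi (fun _ => isCompact_sphere _ _)
  have hKne : K.Nonempty := ⟨fun _ => 1, fun i => by simp⟩
  have hg : ContinuousOn (fun z => ∑ i, ∑ j, ‖A z i j‖) K := by
    refine continuousOn_finset_sum _ fun i _ => continuousOn_finset_sum _ fun j _ => ?_
    exact (continuous_norm.comp ((continuous_id.matrix_elem i j))).comp_continuousOn hAcont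
  obtain ⟨z₀, hz₀K, hz₀⟩ := hKc.exists_isMaxOn hKne hg
  rw [isMaxOn_iff] at hz₀
  set C : ℝ := max (∑ i, ∑ j, ‖A z₀ i j‖) 0 with hC
  have hC0 : 0 ≤ C := le_max_right _ _
  have hCb : ∀ z ∈ K, (∑ i, ∑ j, ‖A z i j‖) ≤ C :=
    fun z hz => le_trans (hz₀ z hz) (le_max_left _ _)
  -- minimal gap between distinct values of V
  set s : Finset ℝ := Finset.image (fun p : Fin m × Fin m => |V p.1 - V p.2|)
    Finset.univ.offDiag with hs
  set g : ℝ := if h : s.Nonempty then s.min' h else 1 with hgdef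
  have hgpos : 0 < g := by
    rw [hgdef]
    split_ifs with h
    · obtain ⟨p, hp, hpe⟩ := Finset.mem_image.mp (s.min'_mem h)
      rw [← hpe]
      rw [Finset.mem_offDiag] at hp
      exact abs_sub_pos.mpr (fun hVc => hp.2.2 (hV hVc))
    · norm_num
  have hgle : ∀ k k' : Fin m, k ≠ k' → g ≤ |sV k - sV k'| := by
    intro k k' hkk
    have hmem : |sV k - sV k'| ∈ s := Finset.mem_image.mpr
      ⟨(Tuple.sort V k, Tuple.sort V k'), Finset.mem_offDiag.mpr
        ⟨Finset.mem_univ _, Finset.mem_univ _, fun h => hkk ((Tuple.sort V).injective h)⟩, rfl⟩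
    have hne : s.Nonempty := ⟨_, hmem⟩
    rw [hgdef]
    rw [dif_pos hne]
    exact Finset.min'_le _ _ hmem
  refine ⟨g / (2 * (C + 1)), by positivity, ?_⟩
  intro t ht htε k k' hkk
  have hbound : ∀ (kk : Fin m) (lam : ℝ), lam ∈ specBand d m V A t kk → |lam - sV kk| ≤ t * C := by
    intro kk lam hlam
    obtain ⟨z, hzK, hH, rfl⟩ := hlam
    set D : Matrix (Fin m) (Fin m) ℂ := Matrix.diagonal (fun i => (V i : ℂ)) with hDdef
    have hsum : ∑ i, ∑ j, ‖((t:ℂ) • A z) i j‖ ≤ t * C := by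
      have he : ∀ i j, ‖((t:ℂ) • A z) i j‖ = t * ‖A z i j‖ := by
        intro i j
        simp [Matrix.smul_apply, norm_mul, Complex.norm_real, abs_of_pos ht,
          Complex.ofReal_mul]
      calc ∑ i, ∑ j, ‖((t:ℂ) • A z) i j‖
          = t * ∑ i, ∑ j, ‖A z i j‖ := by
            simp_rw [he, Finset.mul_sum]
        _ ≤ t * C := mul_le_mul_of_nonneg_left (hCb z hzK) ht.le
    have hC1 : ∀ v : Fin m → ℂ, |SpecHelper.qf ((D + (t:ℂ) • A z) - D) v|
        ≤ (t * C) * SpecHelper.nsq v := by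
      intro v
      rw [show (D + (t:ℂ) • A z) - D = (t:ℂ) • A z from by abel]
      exact (SpecHelper.abs_qf_le _ v).trans
        (mul_le_mul_of_nonneg_right hsum (SpecHelper.nsq_nonneg v))
    have hC2 : ∀ v : Fin m → ℂ, |SpecHelper.qf (D - (D + (t:ℂ) • A z)) v|
        ≤ (t * C) * SpecHelper.nsq v := by
      intro v
      rw [show D - (D + (t:ℂ) • A z) = -((t:ℂ) • A z) from by abel, SpecHelper.qf_neg, abs_neg]
      exact (SpecHelper.abs_qf_le _ v).trans
        (mul_le_mul_of_nonneg_right hsum (SpecHelper.nsq_nonneg v))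
    have w1 := SpecHelper.weyl_le hD hH hC1 kk
    have w2 := SpecHelper.weyl_le hH hD hC2 kk
    have hsd : hD.eigenvalues (Tuple.sort hD.eigenvalues kk) = sV kk := congrFun hDs kk
    rw [hsd] at w1 w2
    rw [abs_le]
    constructor <;> linarith
  rw [Set.disjoint_left]
  intro lam h1 h2
  have b1 := hbound k lam h1
  have b2 := hbound k' lam h2
  have hge := hgle k k' hkk
  have hpos : (0:ℝ) < C + 1 := by linarith
  have h7 : g / (2 * (C + 1)) * (C + 1) = g / 2 := by field_simp
  have h8 : t * (C + 1) < g / 2 := by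
    calc t * (C + 1) < g / (2 * (C + 1)) * (C + 1) := mul_lt_mul_of_pos_right htε hpos
      _ = g / 2 := h7
  have htC : t * C < g / 2 := by nlinarith
  obtain ⟨c1, c2⟩ := abs_le.mp b1
  obtain ⟨c3, c4⟩ := abs_le.mp b2
  rcases abs_cases (sV k - sV k') with ⟨he, _⟩ | ⟨he, _⟩ <;> linarith
end
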